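/- arXiv:1801.06982 — 4 statements merged into one kernel-verified Lean document; each statement's English description precedes it below -/
import Mathlib

section
/- Let c : ℝ → ℝ be nonnegative, symmetric (c(−z) = c(z)) with ∫ℝ |z|² c(z) dz < ∞, let λm : ℝ → ℝ be bounded by a constant C, and let ξ ∈ C_c^∞(ℝ). Define φε(x) = ∫ℝ c(z) λm(x/ε − z) [∫₀¹ (ξ''(x − εzt) − ξ''(x)) z² (1−t) dt] dz. Then ‖φε‖_{L²(ℝ)} → 0 as ε → 0. -/
open MeasureTheory Real Filter Topology
open scoped ENNReal NNReal

noncomputable def tD (ψ : ℝ → ℝ) (h : ℝ) : ℝ≥0∞ :=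
  ∫⁻ x, (‖ψ (x - h) - ψ x‖₊ : ℝ≥0∞) ^ (2:ℝ)

lemma sq_cont : Continuous fun r : ℝ => (‖r‖₊ : ℝ≥0∞) ^ (2:ℝ) :=
  ENNReal.continuous_rpow_const.comp (ENNReal.continuous_coe.comp continuous_nnnorm)

lemma tD_measurable {ψ : ℝ → ℝ} (hψ : Continuous ψ) : Measurable (tD ψ) := by
  have hbase : Continuous fun q : ℝ × ℝ => ψ (q.2 - q.1) - ψ q.2 :=
    (hψ.comp (continuous_snd.sub continuous_fst)).sub (hψ.comp continuous_snd)
  exact (Measurable.lintegral_prod_right ((sq_cont.comp hbase).measurable))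

lemma tD_tendsto {ψ : ℝ → ℝ} (hψc : Continuous ψ) (hψs : HasCompactSupport ψ) :
    Tendsto (tD ψ) (𝓝 0) (𝓝 0) := by
  obtain ⟨M, hM⟩ := hψs.exists_bound_of_continuous hψc
  set K := Metric.cthickening 1 (tsupport ψ) with hK
  have hKc : IsCompact K := hψs.cthickening
  have hKm : MeasurableSet K := Metric.isClosed_cthickening.measurableSet
  have h2M : ∀ x h : ℝ, |ψ (x - h) - ψ x| ≤ 2 * M := by
    intro x h
    calc |ψ (x - h) - ψ x| ≤ |ψ (x - h)| + |ψ x| := abs_sub _ _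
      _ ≤ M + M := add_le_add (hM _) (hM _)
      _ = 2 * M := by ring
  have hMnn : 0 ≤ 2 * M := le_trans (abs_nonneg _) (h2M 0 0)
  have hptle : ∀ x h : ℝ, (‖ψ (x - h) - ψ x‖₊ : ℝ≥0∞) ^ (2:ℝ)
      ≤ ENNReal.ofReal ((2*M)^2) := by
    intro x h
    have h1 : (‖ψ (x - h) - ψ x‖₊ : ℝ≥0∞) ≤ ENNReal.ofReal (2*M) := by
      rw [← enorm_eq_nnnorm, Real.enorm_eq_ofReal_abs]
      exact ENNReal.ofReal_le_ofReal (h2M x h)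
    calc (‖ψ (x - h) - ψ x‖₊ : ℝ≥0∞) ^ (2:ℝ) ≤ ENNReal.ofReal (2*M) ^ (2:ℝ) :=
          ENNReal.rpow_le_rpow h1 (by norm_num)
      _ = ENNReal.ofReal ((2*M) ^ (2:ℝ)) := ENNReal.ofReal_rpow_of_nonneg hMnn (by norm_num)
      _ = ENNReal.ofReal ((2*M)^2) := by
          rw [show ((2*M) : ℝ) ^ (2:ℝ) = (2*M) ^ (2:ℕ) by
            rw [← Real.rpow_natCast (2*M) 2]; norm_num]
  have hzero : ∀ x h : ℝ, |h| ≤ 1 → x ∉ K → ψ (x - h) - ψ x = 0 := by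
    intro x h hh hxK
    have hx1 : ψ x = 0 :=
      image_eq_zero_of_notMem_tsupport fun hx => hxK (Metric.self_subset_cthickening _ hx)
    have hx2 : ψ (x - h) = 0 := by
      refine image_eq_zero_of_notMem_tsupport fun hx => hxK ?_
      refine Metric.mem_cthickening_of_dist_le x (x - h) 1 _ hx ?_
      rw [Real.dist_eq]; simpa using hh
    rw [hx1, hx2, sub_zero]
  have main := tendsto_lintegral_filter_of_dominated_convergence
    (μ := (volume : Measure ℝ)) (l := 𝓝 (0:ℝ))
    (F := fun h x => (‖ψ (x - h) - ψ x‖₊ : ℝ≥0∞) ^ (2:ℝ)) (f := fun _ => 0)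
    (K.indicator fun _ => ENNReal.ofReal ((2*M)^2))
    (Eventually.of_forall fun h =>
      (sq_cont.comp ((hψc.comp (continuous_id.sub continuous_const)).sub hψc)).measurable)
    ?_ ?_ ?_
  · simp only [lintegral_zero] at main; exact main
  · have hev : ∀ᶠ h : ℝ in 𝓝 0, |h| ≤ 1 := by
      have := Metric.closedBall_mem_nhds (0:ℝ) one_pos
      filter_upwards [this] with h hh
      simpa [Real.dist_eq] using hh
    filter_upwards [hev] with h hh
    refine Eventually.of_forall fun x => ?_
    by_cases hx : x ∈ K
    · simpa [Set.indicator_of_mem hx] using hptle x h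
    · rw [Set.indicator_of_notMem hx, hzero x h hh hx]
      simp [ENNReal.zero_rpow_of_pos (by norm_num : (0:ℝ) < 2)]
  · rw [lintegral_indicator hKm, setLIntegral_const]
    exact (ENNReal.mul_lt_top ENNReal.ofReal_lt_top hKc.measure_lt_top).ne
  · refine Eventually.of_forall fun x => ?_
    have base : Tendsto (fun h : ℝ => ψ (x - h) - ψ x) (𝓝 0) (𝓝 0) := by
      have hcont : Continuous fun h : ℝ => ψ (x - h) - ψ x :=
        (hψc.comp (continuous_const.sub continuous_id)).sub continuous_const
      simpa using hcont.tendsto 0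
    have := (sq_cont.tendsto 0).comp base
    simpa [Function.comp_def, ENNReal.zero_rpow_of_pos (by norm_num : (0:ℝ) < 2)] using this

lemma tD_bound {ψ : ℝ → ℝ} (hψc : Continuous ψ) (hψs : HasCompactSupport ψ) :
    ∃ B : ℝ≥0∞, B ≠ ⊤ ∧ ∀ h, tD ψ h ≤ B := by
  obtain ⟨M, hM⟩ := hψs.exists_bound_of_continuous hψc
  have hvol : volume (tsupport ψ) < ⊤ := hψs.measure_lt_top
  refine ⟨ENNReal.ofReal ((2*M)^2) * (volume (tsupport ψ) + volume (tsupport ψ)),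
    (ENNReal.mul_lt_top ENNReal.ofReal_lt_top (by finiteness)).ne, fun h => ?_⟩
  have h2M : ∀ x : ℝ, |ψ (x - h) - ψ x| ≤ 2 * M := by
    intro x
    calc |ψ (x - h) - ψ x| ≤ |ψ (x - h)| + |ψ x| := abs_sub _ _
      _ ≤ M + M := add_le_add (hM _) (hM _)
      _ = 2 * M := by ring
  have hMnn : 0 ≤ 2 * M := le_trans (abs_nonneg _) (h2M 0)
  set U := tsupport ψ ∪ (fun x => x - h) ⁻¹' (tsupport ψ) with hU
  have hUm : MeasurableSet U :=
    (isClosed_tsupport ψ).measurableSet.union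
      (((isClosed_tsupport ψ).preimage (continuous_id.sub continuous_const)).measurableSet)
  have hb : ∀ x, (‖ψ (x - h) - ψ x‖₊ : ℝ≥0∞) ^ (2:ℝ)
      ≤ U.indicator (fun _ => ENNReal.ofReal ((2*M)^2)) x := by
    intro x
    by_cases hx : x ∈ U
    · rw [Set.indicator_of_mem hx]
      have h1 : (‖ψ (x - h) - ψ x‖₊ : ℝ≥0∞) ≤ ENNReal.ofReal (2*M) := by
        rw [← enorm_eq_nnnorm, Real.enorm_eq_ofReal_abs]
        exact ENNReal.ofReal_le_ofReal (h2M x)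
      calc (‖ψ (x - h) - ψ x‖₊ : ℝ≥0∞) ^ (2:ℝ) ≤ ENNReal.ofReal (2*M) ^ (2:ℝ) :=
            ENNReal.rpow_le_rpow h1 (by norm_num)
        _ = ENNReal.ofReal ((2*M) ^ (2:ℝ)) := ENNReal.ofReal_rpow_of_nonneg hMnn (by norm_num)
        _ = ENNReal.ofReal ((2*M)^2) := by
            rw [show ((2*M) : ℝ) ^ (2:ℝ) = (2*M) ^ (2:ℕ) by
              rw [← Real.rpow_natCast (2*M) 2]; norm_num]
    · rw [Set.indicator_of_notMem hx]
      have hx1 : ψ x = 0 :=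
        image_eq_zero_of_notMem_tsupport fun hmem => hx (Set.mem_union_left _ hmem)
      have hx2 : ψ (x - h) = 0 :=
        image_eq_zero_of_notMem_tsupport fun hmem => hx (Set.mem_union_right _ hmem)
      rw [hx1, hx2, sub_zero]
      simp [ENNReal.zero_rpow_of_pos (by norm_num : (0:ℝ) < 2)]
  calc tD ψ h ≤ ∫⁻ x, U.indicator (fun _ => ENNReal.ofReal ((2*M)^2)) x :=
        lintegral_mono hb
    _ = ENNReal.ofReal ((2*M)^2) * volume U := by
        rw [lintegral_indicator hUm, setLIntegral_const]
    _ ≤ ENNReal.ofReal ((2*M)^2) * (volume (tsupport ψ) + volume (tsupport ψ)) := by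
        have hpre : volume ((fun x : ℝ => x - h) ⁻¹' (tsupport ψ)) = volume (tsupport ψ) := by
          rw [show (fun x : ℝ => x - h) = fun x => x + (-h) from funext fun x => by ring,
            measure_preimage_add_right]
        gcongr
        exact (measure_union_le _ _).trans (by rw [hpre])

/-- Remainder estimate in the corrector expansion: with `c ≥ 0` symmetric having a
finite second moment, `λm` bounded, and `ξ ∈ C_c^∞(ℝ)`, the remainder
`φ_ε(x) = ∫ c(z) λm(x/ε − z) [∫₀¹ (ξ''(x−εzt) − ξ''(x)) z² (1−t) dt] dz`
vanishes in `L²(ℝ)` as `ε → 0⁺`. -/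
theorem stmt_4 (c lm ξ : ℝ → ℝ) (hc0 : ∀ z, 0 ≤ c z) (hcsymm : ∀ z, c (-z) = c z)
    (hc2 : Integrable (fun z => z ^ 2 * c z)) (hcm : Measurable c)
    (C : ℝ) (hlm : ∀ x, |lm x| ≤ C) (hlmm : Measurable lm)
    (hξ : ContDiff ℝ (⊤ : ℕ∞) ξ) (hξc : HasCompactSupport ξ) :
    Tendsto
      (fun ε : ℝ => eLpNorm
        (fun x => ∫ z, c z * lm (x / ε - z) *
          ∫ t in (0:ℝ)..1, (deriv (deriv ξ) (x - ε * z * t) - deriv (deriv ξ) x)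
            * z ^ 2 * (1 - t)) 2 volume)
      (𝓝[>] 0) (𝓝 0) := by
  classical
  -- ψ = ξ''
  set ψ : ℝ → ℝ := deriv (deriv ξ) with hψdef
  have hξi : ContDiff ℝ (⊤ : ℕ∞) ξ := hξ.of_le (by simp)
  have h1 : ContDiff ℝ (⊤ : ℕ∞) (deriv ξ) := (contDiff_infty_iff_deriv.mp hξi).2
  have hψ_cont : Continuous ψ := h1.continuous_deriv (by exact_mod_cast le_top)
  have hψ_supp : HasCompactSupport ψ := (hξc.deriv).deriv
  obtain ⟨B, hBtop, hB⟩ := tD_bound hψ_cont hψ_supp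
  have hD0 : Tendsto (tD ψ) (𝓝 0) (𝓝 0) := tD_tendsto hψ_cont hψ_supp
  have hDm : Measurable (tD ψ) := tD_measurable hψ_cont
  have hC0 : 0 ≤ C := le_trans (abs_nonneg _) (hlm 0)
  -- the weight and the auxiliary measure
  set ρ : Measure (ℝ × ℝ) := (volume : Measure ℝ).prod (volume.restrict (Set.Ioc 0 1))
    with hρdef
  set w : ℝ × ℝ → ℝ≥0∞ := fun p => ENNReal.ofReal (p.1 ^ 2 * c p.1) with hwdef
  have hw_meas : Measurable w :=
    ENNReal.measurable_ofReal.comp ((measurable_fst.pow_const 2).mul (hcm.comp measurable_fst))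
  have hw_top : ∀ p, w p ≠ ⊤ := fun p => ENNReal.ofReal_ne_top
  set m : ℝ≥0∞ := ∫⁻ p, w p ∂ρ with hmdef
  have hm_eq : m = ∫⁻ z, ENNReal.ofReal (z ^ 2 * c z) ∂volume := by
    rw [hmdef, hρdef, lintegral_prod _ hw_meas.aemeasurable]
    refine lintegral_congr fun z => ?_
    simp only [hwdef]
    rw [lintegral_const, Measure.restrict_apply_univ, Real.volume_Ioc]
    norm_num
  have hm_top : m ≠ ⊤ := by
    rw [hm_eq]
    have hfin := hc2.hasFiniteIntegral
    rw [hasFiniteIntegral_iff_ofReal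
      (ae_of_all _ fun z => mul_nonneg (sq_nonneg z) (hc0 z))] at hfin
    exact hfin.ne
  set S : ℝ → ℝ≥0∞ := fun ε => ∫⁻ p, w p * tD ψ (ε * p.1 * p.2) ∂ρ with hSdef
  have hS : Tendsto S (𝓝[>] 0) (𝓝 0) := by
    have main := tendsto_lintegral_filter_of_dominated_convergence (μ := ρ)
      (l := 𝓝[>] (0:ℝ))
      (F := fun ε p => w p * tD ψ (ε * p.1 * p.2)) (f := fun _ => 0)
      (fun p => w p * B)
      (Eventually.of_forall fun ε =>
        hw_meas.mul (hDm.comp ((measurable_fst.const_mul ε).mul measurable_snd)))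
      (Eventually.of_forall fun ε => ae_of_all _ fun p => mul_le_mul_right (hB _) _)
      (by
        rw [lintegral_mul_const' B _ hBtop]
        exact ENNReal.mul_ne_top hm_top hBtop)
      (ae_of_all _ fun p => by
        have hcont : Continuous fun ε : ℝ => ε * p.1 * p.2 :=
          (continuous_id.mul continuous_const).mul continuous_const
        have t1 : Tendsto (fun ε : ℝ => ε * p.1 * p.2) (𝓝[>] 0) (𝓝 0) := by
          have := hcont.tendsto 0
          simp only [zero_mul] at this
          exact this.mono_left nhdsWithin_le_nhds
        have := ENNReal.Tendsto.const_mul (a := w p) (hD0.comp t1) (Or.inr (hw_top p))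
        simpa using this)
    simpa only [lintegral_zero] using main
  set K0 : ℝ≥0∞ := ENNReal.ofReal C ^ (2:ℝ) * m with hK0def
  have hK0top : K0 ≠ ⊤ :=
    ENNReal.mul_ne_top (ENNReal.rpow_ne_top_of_nonneg (by norm_num) ENNReal.ofReal_ne_top) hm_top
  have key : ∀ ε : ℝ, eLpNorm
      (fun x => ∫ z, c z * lm (x / ε - z) *
        ∫ t in (0:ℝ)..1, (ψ (x - ε * z * t) - ψ x) * z ^ 2 * (1 - t)) 2 volume
      ≤ (K0 * S ε) ^ (1/2 : ℝ) := by
    intro ε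
    set Δ : ℝ → ℝ × ℝ → ℝ≥0∞ :=
      fun x p => (‖ψ (x - ε * p.1 * p.2) - ψ x‖₊ : ℝ≥0∞) with hΔdef
    have hΔxmeas : ∀ x, Measurable (Δ x) := by
      intro x
      have hcont : Continuous fun p : ℝ × ℝ => ψ (x - ε * p.1 * p.2) - ψ x :=
        (hψ_cont.comp (continuous_const.sub
          ((continuous_const.mul continuous_fst).mul continuous_snd))).sub continuous_const
      exact hcont.measurable.enorm
    -- Step 1: pointwise bound on the norm of the integrand
    have hA : ∀ x, (‖∫ z, c z * lm (x / ε - z) *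
          ∫ t in (0:ℝ)..1, (ψ (x - ε * z * t) - ψ x) * z ^ 2 * (1 - t)‖₊ : ℝ≥0∞)
        ≤ ENNReal.ofReal C * ∫⁻ p, w p * Δ x p ∂ρ := by
      intro x
      have hJmeas : ∀ z : ℝ, Measurable fun t : ℝ => (‖ψ (x - ε * z * t) - ψ x‖₊ : ℝ≥0∞) := by
        intro z
        have hcont : Continuous fun t : ℝ => ψ (x - ε * z * t) - ψ x :=
          (hψ_cont.comp (continuous_const.sub (continuous_const.mul continuous_id))).sub
            continuous_const
        exact hcont.measurable.enorm
      have hI : ∀ z : ℝ,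
          (‖∫ t in (0:ℝ)..1, (ψ (x - ε * z * t) - ψ x) * z ^ 2 * (1 - t)‖₊ : ℝ≥0∞)
          ≤ ENNReal.ofReal (z ^ 2) *
            ∫⁻ t in Set.Ioc (0:ℝ) 1, (‖ψ (x - ε * z * t) - ψ x‖₊ : ℝ≥0∞) := by
        intro z
        rw [intervalIntegral.integral_of_le zero_le_one]
        calc (‖∫ t in Set.Ioc (0:ℝ) 1, (ψ (x - ε * z * t) - ψ x) * z ^ 2 * (1 - t)‖₊ : ℝ≥0∞)
            ≤ ∫⁻ t in Set.Ioc (0:ℝ) 1, ‖(ψ (x - ε * z * t) - ψ x) * z ^ 2 * (1 - t)‖₊ :=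
              enorm_integral_le_lintegral_enorm _
          _ ≤ ∫⁻ t in Set.Ioc (0:ℝ) 1,
                ENNReal.ofReal (z ^ 2) * (‖ψ (x - ε * z * t) - ψ x‖₊ : ℝ≥0∞) := by
              refine setLIntegral_mono (measurable_const.mul (hJmeas z)) fun t ht => ?_
              rw [← enorm_eq_nnnorm, ← enorm_eq_nnnorm, Real.enorm_eq_ofReal_abs, Real.enorm_eq_ofReal_abs,
                ← ENNReal.ofReal_mul (sq_nonneg z)]
              refine ENNReal.ofReal_le_ofReal ?_
              rw [abs_mul, abs_mul]
              have h1t : |1 - t| ≤ 1 := by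
                rw [abs_le]
                constructor
                · linarith [ht.2]
                · linarith [ht.1.le]
              have habs : |z ^ 2| = z ^ 2 := abs_of_nonneg (sq_nonneg z)
              calc |ψ (x - ε*z*t) - ψ x| * |z^2| * |1 - t|
                  ≤ |ψ (x - ε*z*t) - ψ x| * |z^2| * 1 := by gcongr
                _ = z^2 * |ψ (x - ε*z*t) - ψ x| := by rw [habs]; ring
          _ = ENNReal.ofReal (z ^ 2) *
                ∫⁻ t in Set.Ioc (0:ℝ) 1, (‖ψ (x - ε * z * t) - ψ x‖₊ : ℝ≥0∞) :=
              lintegral_const_mul' _ _ ENNReal.ofReal_ne_top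
      calc (‖∫ z, c z * lm (x / ε - z) *
            ∫ t in (0:ℝ)..1, (ψ (x - ε * z * t) - ψ x) * z ^ 2 * (1 - t)‖₊ : ℝ≥0∞)
          ≤ ∫⁻ z, ‖c z * lm (x / ε - z) *
              ∫ t in (0:ℝ)..1, (ψ (x - ε * z * t) - ψ x) * z ^ 2 * (1 - t)‖₊ :=
            enorm_integral_le_lintegral_enorm _
        _ ≤ ∫⁻ z, ENNReal.ofReal C * (ENNReal.ofReal (z ^ 2 * c z) *
              ∫⁻ t in Set.Ioc (0:ℝ) 1, (‖ψ (x - ε * z * t) - ψ x‖₊ : ℝ≥0∞)) := by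
            refine lintegral_mono fun z => ?_
            set Iv : ℝ := ∫ t in (0:ℝ)..1, (ψ (x - ε * z * t) - ψ x) * z ^ 2 * (1 - t)
              with hIvdef
            have e1 : (‖c z * lm (x / ε - z) * Iv‖₊ : ℝ≥0∞)
                ≤ ENNReal.ofReal (C * c z) * (‖Iv‖₊ : ℝ≥0∞) := by
              rw [← enorm_eq_nnnorm, ← enorm_eq_nnnorm, Real.enorm_eq_ofReal_abs, Real.enorm_eq_ofReal_abs,
                ← ENNReal.ofReal_mul (mul_nonneg hC0 (hc0 z))]
              refine ENNReal.ofReal_le_ofReal ?_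
              rw [abs_mul, abs_mul, abs_of_nonneg (hc0 z)]
              calc c z * |lm (x / ε - z)| * |Iv| ≤ c z * C * |Iv| := by
                    gcongr
                    · exact hc0 z
                    · exact hlm _
                _ = C * c z * |Iv| := by ring
            refine e1.trans ?_
            refine (mul_le_mul_right (hI z) _).trans ?_
            refine le_of_eq ?_
            rw [ENNReal.ofReal_mul hC0, ENNReal.ofReal_mul (sq_nonneg z)]
            ring
        _ = ENNReal.ofReal C * ∫⁻ z, ENNReal.ofReal (z ^ 2 * c z) *
              ∫⁻ t in Set.Ioc (0:ℝ) 1, (‖ψ (x - ε * z * t) - ψ x‖₊ : ℝ≥0∞) :=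
            lintegral_const_mul' _ _ ENNReal.ofReal_ne_top
        _ = ENNReal.ofReal C * ∫⁻ p, w p * Δ x p ∂ρ := by
            congr 1
            rw [hρdef, lintegral_prod (fun p => w p * Δ x p) ((hw_meas.mul (hΔxmeas x)).aemeasurable)]
            refine (lintegral_congr fun z => ?_).symm
            simp only [hwdef, hΔdef]
            rw [lintegral_const_mul' _ _ ENNReal.ofReal_ne_top]
    -- Step 2: Cauchy-Schwarz in the weighted measure
    have hCS : ∀ x, (∫⁻ p, w p * Δ x p ∂ρ)
        ≤ m ^ (1/2:ℝ) * (∫⁻ p, w p * Δ x p ^ (2:ℝ) ∂ρ) ^ (1/2:ℝ) := by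
      intro x
      have h22 : (2:ℝ).HolderConjugate 2 := Real.HolderConjugate.two_two
      have hf : AEMeasurable (fun p => w p ^ (1/2:ℝ)) ρ :=
        (ENNReal.continuous_rpow_const.measurable.comp hw_meas).aemeasurable
      have hg : AEMeasurable (fun p => w p ^ (1/2:ℝ) * Δ x p) ρ :=
        ((ENNReal.continuous_rpow_const.measurable.comp hw_meas).mul (hΔxmeas x)).aemeasurable
      have H := ENNReal.lintegral_mul_le_Lp_mul_Lq ρ h22 hf hg
      simp only [Pi.mul_apply] at H
      have e1 : ∀ p, w p ^ (1/2:ℝ) * (w p ^ (1/2:ℝ) * Δ x p) = w p * Δ x p := by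
        intro p
        rw [← mul_assoc, ← ENNReal.rpow_add_of_nonneg _ _ (by norm_num) (by norm_num)]
        norm_num
      have e2 : ∀ p : ℝ × ℝ, (w p ^ (1/2:ℝ)) ^ (2:ℝ) = w p := by
        intro p
        rw [← ENNReal.rpow_mul]
        norm_num
      have e3 : ∀ p, (w p ^ (1/2:ℝ) * Δ x p) ^ (2:ℝ) = w p * Δ x p ^ (2:ℝ) := by
        intro p
        rw [ENNReal.mul_rpow_of_nonneg _ _ (by norm_num : (0:ℝ) ≤ 2), e2]
      calc ∫⁻ p, w p * Δ x p ∂ρ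
          = ∫⁻ p, w p ^ (1/2:ℝ) * (w p ^ (1/2:ℝ) * Δ x p) ∂ρ := by simp_rw [e1]
        _ ≤ (∫⁻ p, (w p ^ (1/2:ℝ)) ^ (2:ℝ) ∂ρ) ^ (1/(2:ℝ)) *
            (∫⁻ p, (w p ^ (1/2:ℝ) * Δ x p) ^ (2:ℝ) ∂ρ) ^ (1/(2:ℝ)) := H
        _ = m ^ (1/2:ℝ) * (∫⁻ p, w p * Δ x p ^ (2:ℝ) ∂ρ) ^ (1/2:ℝ) := by
            simp_rw [e2, e3, ← hmdef]
    -- Step 3: square and integrate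
    have hsq : ∀ x, (‖∫ z, c z * lm (x / ε - z) *
          ∫ t in (0:ℝ)..1, (ψ (x - ε * z * t) - ψ x) * z ^ 2 * (1 - t)‖₊ : ℝ≥0∞) ^ (2:ℝ)
        ≤ K0 * ∫⁻ p, w p * Δ x p ^ (2:ℝ) ∂ρ := by
      intro x
      have h0 := (hA x).trans (mul_le_mul_right (hCS x) _)
      calc (‖∫ z, c z * lm (x / ε - z) *
            ∫ t in (0:ℝ)..1, (ψ (x - ε * z * t) - ψ x) * z ^ 2 * (1 - t)‖₊ : ℝ≥0∞) ^ (2:ℝ)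
          ≤ (ENNReal.ofReal C * (m ^ (1/2:ℝ) *
              (∫⁻ p, w p * Δ x p ^ (2:ℝ) ∂ρ) ^ (1/2:ℝ))) ^ (2:ℝ) :=
            ENNReal.rpow_le_rpow h0 (by norm_num)
        _ = K0 * ∫⁻ p, w p * Δ x p ^ (2:ℝ) ∂ρ := by
            rw [ENNReal.mul_rpow_of_nonneg _ _ (by norm_num : (0:ℝ) ≤ 2),
              ENNReal.mul_rpow_of_nonneg _ _ (by norm_num : (0:ℝ) ≤ 2),
              ← ENNReal.rpow_mul, ← ENNReal.rpow_mul]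
            norm_num [hK0def, mul_assoc]
    -- Step 4: Tonelli swap
    have hswap : ∫⁻ x, ∫⁻ p, w p * Δ x p ^ (2:ℝ) ∂ρ = S ε := by
      have hcont2 : Continuous fun q : ℝ × (ℝ × ℝ) => ψ (q.1 - ε * q.2.1 * q.2.2) - ψ q.1 :=
        (hψ_cont.comp (continuous_fst.sub
          ((continuous_const.mul (continuous_fst.comp continuous_snd)).mul
            (continuous_snd.comp continuous_snd)))).sub (hψ_cont.comp continuous_fst)
      have hmeasU : AEMeasurable
          (Function.uncurry fun x p => w p * Δ x p ^ (2:ℝ)) ((volume : Measure ℝ).prod ρ) := by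
        refine Measurable.aemeasurable ?_
        exact (hw_meas.comp measurable_snd).mul
          ((ENNReal.continuous_rpow_const.measurable).comp hcont2.measurable.enorm)
      rw [lintegral_lintegral_swap hmeasU]
      refine lintegral_congr fun p => ?_
      rw [lintegral_const_mul' _ _ (hw_top p)]
      rfl
    have hint : ∫⁻ x, (‖∫ z, c z * lm (x / ε - z) *
          ∫ t in (0:ℝ)..1, (ψ (x - ε * z * t) - ψ x) * z ^ 2 * (1 - t)‖₊ : ℝ≥0∞) ^ (2:ℝ)
        ≤ K0 * S ε := by
      calc ∫⁻ x, (‖∫ z, c z * lm (x / ε - z) *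
            ∫ t in (0:ℝ)..1, (ψ (x - ε * z * t) - ψ x) * z ^ 2 * (1 - t)‖₊ : ℝ≥0∞) ^ (2:ℝ)
          ≤ ∫⁻ x, K0 * ∫⁻ p, w p * Δ x p ^ (2:ℝ) ∂ρ := lintegral_mono hsq
        _ = K0 * ∫⁻ x, ∫⁻ p, w p * Δ x p ^ (2:ℝ) ∂ρ := lintegral_const_mul' _ _ hK0top
        _ = K0 * S ε := by rw [hswap]
    rw [eLpNorm_eq_lintegral_rpow_enorm_toReal (by norm_num) (by norm_num)]
    simp only [ENNReal.toReal_ofNat]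
    exact ENNReal.rpow_le_rpow hint (by norm_num)
  have upper : Tendsto (fun ε => (K0 * S ε) ^ (1/2:ℝ)) (𝓝[>] 0) (𝓝 0) := by
    have h1' : Tendsto (fun ε => K0 * S ε) (𝓝[>] 0) (𝓝 0) := by
      have := ENNReal.Tendsto.const_mul (a := K0) hS (Or.inr hK0top)
      simpa using this
    have h2' : Tendsto (fun y : ℝ≥0∞ => y ^ (1/2:ℝ)) (𝓝 0) (𝓝 0) := by
      have := ENNReal.continuous_rpow_const (y := 1/2).tendsto 0
      simpa [ENNReal.zero_rpow_of_pos (by norm_num : (0:ℝ) < 1/2)] using this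
    exact h2'.comp h1'
  exact tendsto_of_tendsto_of_tendsto_of_le_of_le tendsto_const_nhds upper
    (fun ε => by simp) key
end

section
/- Let h ∈ L²(𝕋) be a 1-periodic locally square-integrable function on ℝ (with ‖h‖²_{L²(𝕋)} = ∫₀¹ h(y)² dy), and let g ∈ 𝒮(ℝ) be a Schwartz function. Then sup_{q∈ℝ} ‖h(·/ε) g(·+q)‖²_{L²(ℝ)} converges to ‖h‖²_{L²(𝕋)} ‖g‖²_{L²(ℝ)} as ε → 0. -/
set_option maxHeartbeats 1000000

open MeasureTheory Real Filter Topology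

private lemma hIk_aux (h : ℝ → ℝ) (hper : Function.Periodic h 1)
    (hloc : IntegrableOn (fun y => (h y) ^ 2) (Set.Ioc (0:ℝ) 1)) (k : ℤ) :
    IntegrableOn (fun y => (h y) ^ 2) (Set.Ioc (k:ℝ) ((k:ℝ)+1)) := by
  have emb : MeasurableEmbedding (fun x : ℝ => x + (-(k:ℝ))) := measurableEmbedding_addRight _
  have mp : MeasurePreserving (fun x : ℝ => x + (-(k:ℝ))) volume volume :=
    measurePreserving_add_right volume _
  have h2 := (mp.integrableOn_comp_preimage emb).2 hloc
  have hset : (fun x : ℝ => x + -(k:ℝ)) ⁻¹' Set.Ioc 0 1 = Set.Ioc (k:ℝ) ((k:ℝ)+1) := by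
    ext x
    simp only [Set.mem_preimage, Set.mem_Ioc]
    constructor <;> rintro ⟨h1, h2⟩ <;> constructor <;> linarith
  have hfun : ((fun y => (h y) ^ 2) ∘ (fun x : ℝ => x + -(k:ℝ))) = fun y => (h y) ^ 2 := by
    funext x
    have : x + -(k:ℝ) = x - (k:ℝ) * 1 := by ring
    simp only [Function.comp_apply, this, hper.sub_int_mul_eq k]
  rwa [hset, hfun] at h2

private lemma hHk_aux (h : ℝ → ℝ) (hper : Function.Periodic h 1) (k : ℤ) :
    ∫ x in Set.Ioc (k:ℝ) ((k:ℝ)+1), (h x) ^ 2 = ∫ x in Set.Ioc (0:ℝ) 1, (h x) ^ 2 := by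
  have hsq : Function.Periodic (fun y => (h y) ^ 2) 1 := fun x => by simp [hper x]
  have := hsq.intervalIntegral_add_eq (k:ℝ) 0
  rw [intervalIntegral.integral_of_le (by linarith : (k:ℝ) ≤ (k:ℝ) + 1),
    intervalIntegral.integral_of_le (by norm_num : (0:ℝ) ≤ 0 + 1), zero_add] at this
  exact this

private lemma main_est (h : ℝ → ℝ) (hper : Function.Periodic h 1) (hm : Measurable h)
    (hloc : IntegrableOn (fun y => (h y) ^ 2) (Set.Ioc (0:ℝ) 1))
    (F F' : ℝ → ℝ) (hF0 : ∀ x, 0 ≤ F x) (hFd : ∀ x, HasDerivAt F (F' x) x)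
    (hFi : Integrable F) (hF'i : Integrable F') :
    |(∫ x, (h x) ^ 2 * F x) - (∫ x in Set.Ioc (0:ℝ) 1, (h x) ^ 2) * ∫ x, F x|
      ≤ 2 * (∫ x in Set.Ioc (0:ℝ) 1, (h x) ^ 2) * ∫ x, |F' x| := by
  set H : ℝ := ∫ x in Set.Ioc (0:ℝ) 1, (h x) ^ 2 with hHdef
  have hH0 : 0 ≤ H := setIntegral_nonneg measurableSet_Ioc fun x _ => sq_nonneg _
  set s : ℤ → Set ℝ := fun k => Set.Ioc (k:ℝ) ((k:ℝ)+1) with hs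
  have hsm : ∀ k, MeasurableSet (s k) := fun k => measurableSet_Ioc
  have hsd : Pairwise (Function.onFun Disjoint s) := Set.pairwise_disjoint_Ioc_intCast ℝ
  have hsu : (⋃ k, s k) = Set.univ := iUnion_Ioc_intCast ℝ
  have hvol : ∀ k, volume (s k) = 1 := by
    intro k
    rw [hs]
    simp [Real.volume_Ioc]
  have hconst : ∀ (k : ℤ) (c : ℝ), ∫ _x in s k, c = c := by
    intro k c
    rw [setIntegral_const, measureReal_def, hvol k]
    simp
  have hIk : ∀ k : ℤ, IntegrableOn (fun y => (h y) ^ 2) (s k) := fun k =>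
    hIk_aux h hper hloc k
  have hHk : ∀ k : ℤ, ∫ x in s k, (h x) ^ 2 = H := fun k => hHk_aux h hper k
  have Fc : Continuous F := by
    have : Differentiable ℝ F := fun x => (hFd x).differentiableAt
    exact this.continuous
  set D : ℤ → ℝ := fun k => ∫ x in s k, |F' x| with hD
  have hD0 : ∀ k, 0 ≤ D k := fun k => setIntegral_nonneg (hsm k) fun x _ => abs_nonneg _
  -- oscillation bound
  have hosc : ∀ k : ℤ, ∀ x ∈ s k, |F x - F (k:ℝ)| ≤ D k := by
    intro k x hx
    obtain ⟨hx1, hx2⟩ := hx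
    have ftc : ∫ t in (k:ℝ)..x, F' t = F x - F (k:ℝ) :=
      intervalIntegral.integral_eq_sub_of_hasDerivAt (fun t _ => hFd t)
        hF'i.intervalIntegrable
    rw [← ftc]
    calc |∫ t in (k:ℝ)..x, F' t| ≤ ∫ t in (k:ℝ)..x, |F' t| :=
          intervalIntegral.abs_integral_le_integral_abs hx1.le
      _ = ∫ t in Set.Ioc (k:ℝ) x, |F' t| := intervalIntegral.integral_of_le hx1.le
      _ ≤ D k := by
          refine setIntegral_mono_set hF'i.abs.integrableOn
            (ae_of_all _ fun t => abs_nonneg _) ?_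
          exact (Set.Ioc_subset_Ioc_right hx2).eventuallyLE
  have hFub : ∀ k : ℤ, ∀ x ∈ s k, F x ≤ F (k:ℝ) + D k := by
    intro k x hx
    have := (abs_le.1 (hosc k x hx)).2
    linarith
  have hFlb : ∀ k : ℤ, ∀ x ∈ s k, F (k:ℝ) ≤ F x + D k := by
    intro k x hx
    have := (abs_le.1 (hosc k x hx)).1
    linarith
  -- integrability on each interval
  have hGk : ∀ k : ℤ, IntegrableOn (fun x => (h x) ^ 2 * F x) (s k) := by
    intro k
    refine Integrable.mono' ((hIk k).mul_const (F (k:ℝ) + D k)) ?_ ?_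
    · exact ((hm.pow_const 2).aestronglyMeasurable.mul Fc.aestronglyMeasurable).restrict
    · refine (ae_restrict_iff' (hsm k)).2 (Eventually.of_forall fun x hx => ?_)
      rw [Real.norm_eq_abs, abs_of_nonneg (mul_nonneg (sq_nonneg _) (hF0 x))]
      exact mul_le_mul_of_nonneg_left (hFub k x hx) (sq_nonneg _)
  -- per-interval estimates
  have e1 : ∀ k : ℤ, |(∫ x in s k, (h x) ^ 2 * F x) - H * F (k:ℝ)| ≤ H * D k := by
    intro k
    have hHF : H * F (k:ℝ) = ∫ x in s k, (h x) ^ 2 * F (k:ℝ) := by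
      rw [MeasureTheory.integral_mul_const, hHk k]
    have heq : (∫ x in s k, (h x) ^ 2 * F x) - H * F (k:ℝ)
        = ∫ x in s k, (h x) ^ 2 * (F x - F (k:ℝ)) := by
      rw [hHF, ← integral_sub (hGk k) ((hIk k).mul_const _)]
      congr 1
      funext x
      ring
    rw [heq, ← Real.norm_eq_abs]
    have hb : ∀ᵐ x ∂(volume.restrict (s k)),
        ‖(h x) ^ 2 * (F x - F (k:ℝ))‖ ≤ (h x) ^ 2 * D k := by
      refine (ae_restrict_iff' (hsm k)).2 (Eventually.of_forall fun x hx => ?_)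
      rw [Real.norm_eq_abs, abs_mul, abs_of_nonneg (sq_nonneg (h x))]
      exact mul_le_mul_of_nonneg_left (hosc k x hx) (sq_nonneg _)
    calc ‖∫ x in s k, (h x) ^ 2 * (F x - F (k:ℝ))‖
        ≤ ∫ x in s k, (h x) ^ 2 * D k :=
          norm_integral_le_of_norm_le ((hIk k).mul_const _) hb
      _ = H * D k := by rw [MeasureTheory.integral_mul_const, hHk k]
  have e2 : ∀ k : ℤ, |(∫ x in s k, F x) - F (k:ℝ)| ≤ D k := by
    intro k
    have hci : IntegrableOn (fun _ : ℝ => F (k:ℝ)) (s k) := by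
      exact integrableOn_const (by rw [hvol k]; exact ENNReal.one_ne_top)
    have heq : (∫ x in s k, F x) - F (k:ℝ) = ∫ x in s k, (F x - F (k:ℝ)) := by
      rw [integral_sub hFi.integrableOn hci, hconst k]
    rw [heq, ← Real.norm_eq_abs]
    have hb : ∀ᵐ x ∂(volume.restrict (s k)), ‖F x - F (k:ℝ)‖ ≤ D k := by
      refine (ae_restrict_iff' (hsm k)).2 (Eventually.of_forall fun x hx => ?_)
      rw [Real.norm_eq_abs]
      exact hosc k x hx
    calc ‖∫ x in s k, (F x - F (k:ℝ))‖
        ≤ ∫ _x in s k, D k := norm_integral_le_of_norm_le (by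
            exact integrableOn_const (by rw [hvol k]; exact ENNReal.one_ne_top)) hb
      _ = D k := hconst k _
  have ebound : ∀ k : ℤ,
      |(∫ x in s k, (h x) ^ 2 * F x) - H * ∫ x in s k, F x| ≤ 2 * H * D k := by
    intro k
    have t1 := e1 k
    have t2 : |H * F (k:ℝ) - H * ∫ x in s k, F x| ≤ H * D k := by
      rw [← mul_sub, abs_mul, abs_of_nonneg hH0, abs_sub_comm]
      exact mul_le_mul_of_nonneg_left (e2 k) hH0
    calc |(∫ x in s k, (h x) ^ 2 * F x) - H * ∫ x in s k, F x|
        ≤ |(∫ x in s k, (h x) ^ 2 * F x) - H * F (k:ℝ)|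
            + |H * F (k:ℝ) - H * ∫ x in s k, F x| := abs_sub_le _ _ _
      _ ≤ H * D k + H * D k := add_le_add t1 t2
      _ = 2 * H * D k := by ring
  -- sums
  have hFsum : HasSum (fun k : ℤ => ∫ x in s k, F x) (∫ x, F x) := by
    have := hasSum_integral_iUnion hsm hsd (by rw [hsu]; exact hFi.integrableOn)
    rwa [hsu, setIntegral_univ] at this
  have hDsum : HasSum D (∫ x, |F' x|) := by
    have := hasSum_integral_iUnion hsm hsd (by rw [hsu]; exact hF'i.abs.integrableOn)
    rwa [hsu, setIntegral_univ] at this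
  -- global integrability
  have hintbound : ∀ k : ℤ, ∫ x in s k, ‖(h x) ^ 2 * F x‖
      ≤ H * (∫ x in s k, F x) + 2 * H * D k := by
    intro k
    have h1 : ∫ x in s k, ‖(h x) ^ 2 * F x‖ = ∫ x in s k, (h x) ^ 2 * F x := by
      refine integral_congr_ae (ae_of_all _ fun x => ?_)
      simp only [Real.norm_eq_abs]
      exact abs_of_nonneg (mul_nonneg (sq_nonneg _) (hF0 x))
    have h2 : (∫ x in s k, (h x) ^ 2 * F x) ≤ H * F (k:ℝ) + H * D k := by
      have := (abs_le.1 (e1 k)).2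
      linarith
    have h3 : F (k:ℝ) ≤ (∫ x in s k, F x) + D k := by
      have := (abs_le.1 (e2 k)).1
      linarith
    have h4 : H * F (k:ℝ) ≤ H * ((∫ x in s k, F x) + D k) :=
      mul_le_mul_of_nonneg_left h3 hH0
    rw [h1]
    nlinarith
  have hGsummable : Summable (fun k : ℤ => ∫ x in s k, ‖(h x) ^ 2 * F x‖) := by
    refine Summable.of_nonneg_of_le
      (fun k => setIntegral_nonneg (hsm k) fun x _ => norm_nonneg _) hintbound ?_
    exact (hFsum.summable.mul_left H).add ((hDsum.summable.mul_left (2 * H)))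
  have hGint : Integrable (fun x => (h x) ^ 2 * F x) := by
    have := integrableOn_iUnion_of_summable_integral_norm hGk hGsummable
    rwa [hsu, integrableOn_univ] at this
  have hGsum : HasSum (fun k : ℤ => ∫ x in s k, (h x) ^ 2 * F x)
      (∫ x, (h x) ^ 2 * F x) := by
    have := hasSum_integral_iUnion hsm hsd (by rw [hsu]; exact hGint.integrableOn)
    rwa [hsu, setIntegral_univ] at this
  -- conclusion
  have hdiff : HasSum (fun k : ℤ => (∫ x in s k, (h x) ^ 2 * F x) - H * ∫ x in s k, F x)
      ((∫ x, (h x) ^ 2 * F x) - H * ∫ x, F x) := hGsum.sub (hFsum.mul_left H)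
  have hsb : Summable fun k : ℤ => 2 * H * D k := hDsum.summable.mul_left _
  have hsa : Summable fun k : ℤ =>
      |(∫ x in s k, (h x) ^ 2 * F x) - H * ∫ x in s k, F x| :=
    Summable.of_nonneg_of_le (fun k => abs_nonneg _) ebound hsb
  calc |(∫ x, (h x) ^ 2 * F x) - H * ∫ x, F x|
      = |∑' k : ℤ, ((∫ x in s k, (h x) ^ 2 * F x) - H * ∫ x in s k, F x)| := by
        rw [hdiff.tsum_eq]
    _ ≤ ∑' k : ℤ, |(∫ x in s k, (h x) ^ 2 * F x) - H * ∫ x in s k, F x| := by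
        have := norm_tsum_le_tsum_norm
          (f := fun k : ℤ => (∫ x in s k, (h x) ^ 2 * F x) - H * ∫ x in s k, F x)
          (by simpa only [Real.norm_eq_abs] using hsa)
        simpa only [Real.norm_eq_abs] using this
    _ ≤ ∑' k : ℤ, 2 * H * D k := Summable.tsum_le_tsum ebound hsa hsb
    _ = 2 * H * ∫ x, |F' x| := by rw [tsum_mul_left, hDsum.tsum_eq]

/-- For a 1-periodic locally square-integrable `h` and a Schwartz function `g`,
`sup_{q∈ℝ} ‖h(·/ε) g(·+q)‖²_{L²(ℝ)} → ‖h‖²_{L²(𝕋)} ‖g‖²_{L²(ℝ)}` as `ε → 0⁺`. -/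
theorem stmt_5 (h : ℝ → ℝ) (hper : Function.Periodic h 1) (hm : Measurable h)
    (hloc : IntegrableOn (fun y => (h y) ^ 2) (Set.Ioc (0:ℝ) 1))
    (g : SchwartzMap ℝ ℝ) :
    Tendsto
      (fun ε : ℝ => ⨆ q : ℝ, ∫ y, (h (y / ε)) ^ 2 * (g (y + q)) ^ 2)
      (𝓝[>] 0)
      (𝓝 ((∫ y in Set.Ioc (0:ℝ) 1, (h y) ^ 2) * ∫ y, (g y) ^ 2)) := by
  set H : ℝ := ∫ y in Set.Ioc (0:ℝ) 1, (h y) ^ 2 with hHdef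
  have hH0 : 0 ≤ H := setIntegral_nonneg measurableSet_Ioc fun x _ => sq_nonneg _
  set g' : SchwartzMap ℝ ℝ := SchwartzMap.derivCLM ℝ ℝ g with hg'def
  -- boundedness of g
  obtain ⟨C₀, _hC₀pos, hC₀⟩ := g.decay 0 0
  have hgb : ∀ x : ℝ, |g x| ≤ C₀ := by
    intro x
    have := hC₀ x
    simpa [norm_iteratedFDeriv_zero, Real.norm_eq_abs] using this
  -- integrability of g^2 and of |2 g g'|
  have hg2i : Integrable (fun y => (g y) ^ 2) := by
    have := (g.integrable (μ := volume)).bdd_mul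
      (c := C₀) g.continuous.aestronglyMeasurable (ae_of_all _ fun x => by simpa [Real.norm_eq_abs] using hgb x)
    refine this.congr (ae_of_all _ fun x => ?_)
    ring
  have hggi : Integrable (fun y => 2 * g y * deriv g y) := by
    have hb : ∃ Cb : ℝ, ∀ x : ℝ, ‖2 * g x‖ ≤ Cb := by
      refine ⟨2 * C₀, fun x => ?_⟩
      rw [Real.norm_eq_abs, abs_mul, abs_two]
      nlinarith [hgb x, abs_nonneg (g x)]
    have := (g'.integrable (μ := volume)).bdd_mul
      (g.continuous.aestronglyMeasurable.const_mul (2:ℝ)) (ae_of_all _ hb.choose_spec)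
    refine this.congr (ae_of_all _ fun x => ?_)
    have hgx : g' x = deriv g x := SchwartzMap.derivCLM_apply ℝ g x
    simp only [hgx]
  set Dg : ℝ := ∫ y, |2 * g y * deriv g y| with hDgdef
  have hDg0 : 0 ≤ Dg := integral_nonneg fun x => abs_nonneg _
  set C : ℝ := 2 * H * Dg with hCdef
  have hC0 : 0 ≤ C := by positivity
  set L : ℝ := H * ∫ y, (g y) ^ 2 with hLdef
  -- key pointwise-in-(ε,q) estimate
  have key : ∀ ε : ℝ, 0 < ε → ∀ q : ℝ,
      |(∫ y, (h (y / ε)) ^ 2 * (g (y + q)) ^ 2) - L| ≤ C * ε := by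
    intro ε hε q
    have hεne : ε ≠ 0 := ne_of_gt hε
    set F : ℝ → ℝ := fun x => (g (ε * x + q)) ^ 2 with hFdef
    set F' : ℝ → ℝ := fun x => (2 * g (ε * x + q) * deriv g (ε * x + q)) * ε with hF'def
    have hu : ∀ x : ℝ, HasDerivAt (fun x : ℝ => ε * x + q) ε x := by
      intro x
      simpa using ((hasDerivAt_id x).const_mul ε).add_const q
    have hgu : ∀ x : ℝ, HasDerivAt (fun x : ℝ => g (ε * x + q)) (deriv g (ε * x + q) * ε) x := by
      intro x
      exact (g.differentiableAt.hasDerivAt).comp x (hu x)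
    have hFd : ∀ x : ℝ, HasDerivAt F (F' x) x := by
      intro x
      have := (hgu x).fun_pow 2
      simpa [hFdef, hF'def, pow_one, mul_comm, mul_assoc, mul_left_comm] using this
    have hF0 : ∀ x, 0 ≤ F x := fun x => sq_nonneg _
    have hFi : Integrable F := by
      have h1 : Integrable (fun y => (g (y + q)) ^ 2) := by
        have := ((measurePreserving_add_right volume q).integrable_comp_emb
          (measurableEmbedding_addRight q)).2 hg2i
        simpa [Function.comp_def] using this
      have := h1.comp_mul_left' hεne
      simpa [hFdef] using this
    have hF'i : Integrable F' := by
      have h1 : Integrable (fun y => (2 * g (y + q) * deriv g (y + q)) * ε) := by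
        have h0 := ((measurePreserving_add_right volume q).integrable_comp_emb
          (measurableEmbedding_addRight q)).2 hggi
        have := h0.mul_const ε
        simpa [Function.comp_def] using this
      have := h1.comp_mul_left' hεne
      simpa [hF'def] using this
    have main := main_est h hper hm hloc F F' hF0 hFd hFi hF'i
    -- change of variables
    have cov1 : (∫ y, (h (y / ε)) ^ 2 * (g (y + q)) ^ 2) = ε * ∫ x, (h x) ^ 2 * F x := by
      have := Measure.integral_comp_div (fun x => (h x) ^ 2 * F x) ε
      rw [abs_of_pos hε, smul_eq_mul] at this
      rw [← this]
      refine integral_congr_ae (ae_of_all _ fun y => ?_)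
      rw [hFdef]
      simp only []
      rw [mul_div_cancel₀ _ hεne]
    have cov2 : (∫ x, F x) = ε⁻¹ * ∫ y, (g y) ^ 2 := by
      have h1 := Measure.integral_comp_mul_left (fun y => (g (y + q)) ^ 2) ε
      rw [abs_of_pos (inv_pos.2 hε), smul_eq_mul] at h1
      have h2 : (∫ y, (g (y + q)) ^ 2) = ∫ y, (g y) ^ 2 :=
        integral_add_right_eq_self (fun y => (g y) ^ 2) q
      rw [hFdef]
      simp only []
      rw [h1, h2]
    have cov3 : (∫ x, |F' x|) = Dg := by
      have h1 := Measure.integral_comp_mul_left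
        (fun y => |(2 * g (y + q) * deriv g (y + q)) * ε|) ε
      rw [abs_of_pos (inv_pos.2 hε), smul_eq_mul] at h1
      have h2 : (∫ y, |(2 * g (y + q) * deriv g (y + q)) * ε|)
          = ∫ y, |(2 * g y * deriv g y) * ε| :=
        integral_add_right_eq_self (fun y => |(2 * g y * deriv g y) * ε|) q
      have h3 : (∫ y, |(2 * g y * deriv g y) * ε|) = ε * Dg := by
        rw [hDgdef, ← integral_const_mul]
        refine integral_congr_ae (ae_of_all _ fun y => ?_)
        simp only [abs_mul, abs_of_pos hε]
        ring
      calc (∫ x, |F' x|) = ∫ x, |(2 * g (ε * x + q) * deriv g (ε * x + q)) * ε| := rfl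
        _ = ε⁻¹ * ∫ y, |(2 * g (y + q) * deriv g (y + q)) * ε| := h1
        _ = ε⁻¹ * (ε * Dg) := by rw [h2, h3]
        _ = Dg := by field_simp
    calc |(∫ y, (h (y / ε)) ^ 2 * (g (y + q)) ^ 2) - L|
        = |ε * ((∫ x, (h x) ^ 2 * F x) - H * ∫ x, F x)| := by
          rw [cov1, hLdef, cov2]
          congr 1
          field_simp
      _ = ε * |(∫ x, (h x) ^ 2 * F x) - H * ∫ x, F x| := by
          rw [abs_mul, abs_of_pos hε]
      _ ≤ ε * (2 * H * ∫ x, |F' x|) := by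
          exact mul_le_mul_of_nonneg_left main hε.le
      _ = C * ε := by rw [cov3, hCdef]; ring
  -- assemble: squeeze the sup
  have hbdd : ∀ ε : ℝ, 0 < ε → BddAbove (Set.range fun q : ℝ =>
      ∫ y, (h (y / ε)) ^ 2 * (g (y + q)) ^ 2) := by
    intro ε hε
    refine ⟨L + C * ε, ?_⟩
    rintro x ⟨q, rfl⟩
    have := (abs_le.1 (key ε hε q)).2
    linarith
  have hup : ∀ ε : ℝ, 0 < ε →
      (⨆ q : ℝ, ∫ y, (h (y / ε)) ^ 2 * (g (y + q)) ^ 2) ≤ L + C * ε := by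
    intro ε hε
    refine ciSup_le fun q => ?_
    have := (abs_le.1 (key ε hε q)).2
    linarith
  have hlo : ∀ ε : ℝ, 0 < ε →
      L - C * ε ≤ ⨆ q : ℝ, ∫ y, (h (y / ε)) ^ 2 * (g (y + q)) ^ 2 := by
    intro ε hε
    refine le_ciSup_of_le (hbdd ε hε) 0 ?_
    have := (abs_le.1 (key ε hε 0)).1
    linarith
  have hLlim1 : Tendsto (fun ε : ℝ => L - C * ε) (𝓝[>] 0) (𝓝 L) := by
    have : Tendsto (fun ε : ℝ => L - C * ε) (𝓝 0) (𝓝 (L - C * 0)) := by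
      exact (tendsto_const_nhds.sub ((tendsto_const_nhds).mul tendsto_id))
    simpa using this.mono_left nhdsWithin_le_nhds
  have hLlim2 : Tendsto (fun ε : ℝ => L + C * ε) (𝓝[>] 0) (𝓝 L) := by
    have : Tendsto (fun ε : ℝ => L + C * ε) (𝓝 0) (𝓝 (L + C * 0)) := by
      exact (tendsto_const_nhds.add ((tendsto_const_nhds).mul tendsto_id))
    simpa using this.mono_left nhdsWithin_le_nhds
  refine tendsto_of_tendsto_of_tendsto_of_le_of_le' hLlim1 hLlim2 ?_ ?_
  · filter_upwards [self_mem_nhdsWithin] with ε hε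
    exact hlo ε hε
  · filter_upwards [self_mem_nhdsWithin] with ε hε
    exact hup ε hε
end

section
/- Let m : ℝ → ℝ be a smooth 1-periodic function with ∫₀¹ (1 − m(y)) dy = 0, and let ζ : ℝ → ℝ be a smooth 1-periodic solution of ζ'' = 1 − m on 𝕋 with ∫₀¹ ζ = 0. Then for every ε > 0 and every u ∈ H¹(ℝ), the distribution u·(1 − m(·/ε)) satisfies ‖u (1 − m(·/ε))‖_{H^{−1}(ℝ)} ≤ C ε ‖u‖_{H¹(ℝ)} for a constant C depending only on ζ (through ‖ζ‖_{C²(𝕋)}). -/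
open MeasureTheory Real Filter Topology


-- helper 1: periodic continuous bound
lemma periodic_bound {f : ℝ → ℝ} (hf : Continuous f) (hp : Function.Periodic f 1) :
    ∃ K, 0 ≤ K ∧ ∀ x, |f x| ≤ K := by
  obtain ⟨C, hC⟩ := (isCompact_Icc (a := (0:ℝ)) (b := 1)).exists_bound_of_continuousOn
    hf.continuousOn
  refine ⟨max C 0, le_max_right _ _, fun x => ?_⟩
  have h1 : f (Int.fract x) = f x := by
    have := hp.sub_int_mul_eq (x := x) ⌊x⌋
    rw [mul_one] at this
    rw [Int.fract]
    exact this
  have h2 : Int.fract x ∈ Set.Icc (0:ℝ) 1 :=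
    ⟨Int.fract_nonneg x, (Int.fract_lt_one x).le⟩
  calc |f x| = ‖f (Int.fract x)‖ := by rw [h1, Real.norm_eq_abs]
    _ ≤ C := hC _ h2
    _ ≤ max C 0 := le_max_left _ _

-- helper 2: derivative of periodic is periodic
lemma periodic_deriv' {f : ℝ → ℝ} (hp : Function.Periodic f 1) :
    Function.Periodic (deriv f) 1 := by
  intro x
  have h : (fun y => f (y + 1)) = f := funext fun y => hp y
  calc deriv f (x + 1) = deriv (fun y => f (y + 1)) x := (deriv_comp_add_const f 1 x).symm
    _ = deriv f x := by rw [h]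

-- helper 3: Hölder / Cauchy-Schwarz
lemma holder2 {f g : ℝ → ℝ} (hf : MemLp f 2 (volume : Measure ℝ))
    (hg : MemLp g 2 (volume : Measure ℝ)) :
    ∫ x, |f x| * |g x| ≤ (eLpNorm f 2 volume).toReal * (eLpNorm g 2 volume).toReal := by
  have hpq : Real.HolderConjugate 2 2 := ⟨by norm_num, by norm_num, by norm_num⟩
  have h2 : ENNReal.ofReal (2:ℝ) = 2 := by norm_num
  have hf' : MemLp (fun x => |f x|) (ENNReal.ofReal (2:ℝ)) (volume : Measure ℝ) := by
    rw [h2]; simpa [Real.norm_eq_abs] using hf.norm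
  have hg' : MemLp (fun x => |g x|) (ENNReal.ofReal (2:ℝ)) (volume : Measure ℝ) := by
    rw [h2]; simpa [Real.norm_eq_abs] using hg.norm
  have H := integral_mul_le_Lp_mul_Lq_of_nonneg hpq
    (Eventually.of_forall fun x => abs_nonneg (f x))
    (Eventually.of_forall fun x => abs_nonneg (g x)) hf' hg'
  have ef : (eLpNorm f 2 volume).toReal = (∫ x, |f x| ^ (2:ℝ)) ^ (1/(2:ℝ)) := by
    rw [hf.eLpNorm_eq_integral_rpow_norm two_ne_zero ENNReal.ofNat_ne_top]
    simp [Real.norm_eq_abs, ENNReal.toReal_ofNat]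
    positivity
  have eg : (eLpNorm g 2 volume).toReal = (∫ x, |g x| ^ (2:ℝ)) ^ (1/(2:ℝ)) := by
    rw [hg.eLpNorm_eq_integral_rpow_norm two_ne_zero ENNReal.ofNat_ne_top]
    simp [Real.norm_eq_abs, ENNReal.toReal_ofNat]
    positivity
  rw [ef, eg]
  exact H


/-- If `m` is smooth 1-periodic with zero-mean defect `1 − m`, and `ζ` is a smooth
1-periodic solution of `ζ'' = 1 − m` with zero mean, then the multiplication
operator `u ↦ u (1 − m(·/ε))` is `O(ε)` from `H¹(ℝ)` to `H^{−1}(ℝ)`, stated via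
the dual pairing against `v ∈ H¹(ℝ)`. -/
theorem stmt_6 (m ζ : ℝ → ℝ) (hm : ContDiff ℝ (⊤ : ℕ∞) m) (hmp : Function.Periodic m 1)
    (hmean : ∫ y in Set.Ioc (0:ℝ) 1, (1 - m y) = 0)
    (hζ : ContDiff ℝ (⊤ : ℕ∞) ζ) (hζp : Function.Periodic ζ 1)
    (hζeq : ∀ y, deriv (deriv ζ) y = 1 - m y)
    (hζmean : ∫ y in Set.Ioc (0:ℝ) 1, ζ y = 0) :
    ∃ C > 0, ∀ ε > (0:ℝ), ∀ u v : ℝ → ℝ,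
      Differentiable ℝ u → MemLp u 2 (volume : Measure ℝ) →
      MemLp (deriv u) 2 (volume : Measure ℝ) →
      Differentiable ℝ v → MemLp v 2 (volume : Measure ℝ) →
      MemLp (deriv v) 2 (volume : Measure ℝ) →
      |∫ x, u x * (1 - m (x / ε)) * v x| ≤
        C * ε * ((eLpNorm u 2 volume).toReal + (eLpNorm (deriv u) 2 volume).toReal) *
          ((eLpNorm v 2 volume).toReal + (eLpNorm (deriv v) 2 volume).toReal) := by
  -- continuity of derivatives of ζ
  have hζ1 := (contDiff_infty_iff_deriv.mp (hζ.of_le (by simp))).2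
  have hζ'diff : Differentiable ℝ (deriv ζ) := (contDiff_infty_iff_deriv.mp hζ1).1
  have hζ'cont : Continuous (deriv ζ) := hζ1.continuous
  have hζ'per : Function.Periodic (deriv ζ) 1 := periodic_deriv' hζp
  obtain ⟨K, hK0, hK⟩ := periodic_bound hζ'cont hζ'per
  refine ⟨K + 1, by positivity, ?_⟩
  intro ε hε u v hud hu2 hu'2 hvd hv2 hv'2
  have hεne : ε ≠ 0 := ne_of_gt hε
  set g : ℝ → ℝ := fun x => u x * v x with hg
  set g' : ℝ → ℝ := fun x => deriv u x * v x + u x * deriv v x with hg'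
  set F : ℝ → ℝ := fun x => ε * deriv ζ (x / ε) with hF
  set F' : ℝ → ℝ := fun x => 1 - m (x / ε) with hF'
  -- derivatives
  have hgd : ∀ x, HasDerivAt g (g' x) x := fun x =>
    ((hud x).hasDerivAt.mul (hvd x).hasDerivAt)
  have hFd : ∀ x, HasDerivAt F (F' x) x := by
    intro x
    have h1 : HasDerivAt (fun y : ℝ => y / ε) (1 / ε) x := by
      simpa using (hasDerivAt_id x).div_const ε
    have h2 : HasDerivAt (deriv ζ) (deriv (deriv ζ) (x / ε)) (x / ε) :=
      (hζ'diff (x / ε)).hasDerivAt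
    have h3 : HasDerivAt (fun y : ℝ => deriv ζ (y / ε)) (deriv (deriv ζ) (x / ε) * (1 / ε)) x :=
      by have h := h2.comp x h1; exact h
    have h4 := h3.const_mul ε
    have : ε * (deriv (deriv ζ) (x / ε) * (1 / ε)) = F' x := by
      rw [hζeq]; field_simp [hF']; rfl
    rwa [this] at h4
  -- integrability facts
  have hpqr : 1/(1:ENNReal) = 1/2 + 1/2 := by
    simp [one_div, ENNReal.inv_two_add_inv_two]
  have hint_uv : Integrable g volume := by
    have := hv2.smul (φ := u) hu2 (r := 1)
    exact memLp_one_iff_integrable.mp this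
  have hint_u'v : Integrable (fun x => deriv u x * v x) volume := by
    have := hv2.smul (φ := deriv u) hu'2 (r := 1)
    exact memLp_one_iff_integrable.mp this
  have hint_uv' : Integrable (fun x => u x * deriv v x) volume := by
    have := hv'2.smul (φ := u) hu2 (r := 1)
    exact memLp_one_iff_integrable.mp this
  have hint_g' : Integrable g' volume := hint_u'v.add hint_uv'
  have hFcont : Continuous F := continuous_const.mul (hζ'cont.comp (continuous_id.div_const ε))
  have hFbdd : ∀ x, ‖F x‖ ≤ ε * K := by
    intro x
    rw [Real.norm_eq_abs, hF, abs_mul, abs_of_pos hε]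
    exact mul_le_mul_of_nonneg_left (hK _) hε.le
  have hF'cont : Continuous F' :=
    continuous_const.sub (hm.continuous.comp (continuous_id.div_const ε))
  obtain ⟨M, hM0, hM⟩ := periodic_bound hm.continuous hmp
  have hF'bdd : ∀ x, ‖F' x‖ ≤ 1 + M := by
    intro x
    rw [Real.norm_eq_abs, hF']
    calc |1 - m (x / ε)| ≤ |(1:ℝ)| + |m (x / ε)| := abs_sub _ _
      _ ≤ 1 + M := by rw [abs_one]; exact add_le_add le_rfl (hM _)
  have hint_gF' : Integrable (g * F') volume := by
    have := hint_uv.bdd_mul hF'cont.aestronglyMeasurable (Eventually.of_forall hF'bdd)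
    exact this.congr (Eventually.of_forall fun x => mul_comm _ _)
  have hint_g'F : Integrable (g' * F) volume := by
    have := hint_g'.bdd_mul hFcont.aestronglyMeasurable (Eventually.of_forall hFbdd)
    exact this.congr (Eventually.of_forall fun x => mul_comm _ _)
  have hint_gF : Integrable (g * F) volume := by
    have := hint_uv.bdd_mul hFcont.aestronglyMeasurable (Eventually.of_forall hFbdd)
    exact this.congr (Eventually.of_forall fun x => mul_comm _ _)
  -- integration by parts
  have key : ∫ x, g x * F' x = - ∫ x, g' x * F x :=
    integral_mul_deriv_eq_deriv_mul_of_integrable (fun x _ => hgd x) (fun x _ => hFd x) hint_gF' hint_g'F hint_gF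
  have hgoal_eq : ∫ x, u x * (1 - m (x / ε)) * v x = ∫ x, g x * F' x := by
    apply integral_congr_ae
    filter_upwards with x
    simp only [hg, hF']
    ring
  -- Hölder bounds
  have hH1 : ∫ x, |deriv u x| * |v x| ≤
      (eLpNorm (deriv u) 2 volume).toReal * (eLpNorm v 2 volume).toReal := holder2 hu'2 hv2
  have hH2 : ∫ x, |u x| * |deriv v x| ≤
      (eLpNorm u 2 volume).toReal * (eLpNorm v 2 volume).toReal * 0 + 
      (eLpNorm u 2 volume).toReal * (eLpNorm (deriv v) 2 volume).toReal := by
    simpa using holder2 hu2 hv'2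
  -- putting it together
  set a := (eLpNorm u 2 volume).toReal
  set b := (eLpNorm (deriv u) 2 volume).toReal
  set c := (eLpNorm v 2 volume).toReal
  set d := (eLpNorm (deriv v) 2 volume).toReal
  have ha : 0 ≤ a := ENNReal.toReal_nonneg
  have hb : 0 ≤ b := ENNReal.toReal_nonneg
  have hc : 0 ≤ c := ENNReal.toReal_nonneg
  have hd : 0 ≤ d := ENNReal.toReal_nonneg
  have habs : |∫ x, g' x * F x| ≤ ε * K * (b * c + a * d) := by
    calc |∫ x, g' x * F x| ≤ ∫ x, |g' x| * |F x| := by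
          simpa [Real.norm_eq_abs, abs_mul] using
            norm_integral_le_integral_norm (μ := (volume : Measure ℝ)) fun x => g' x * F x
      _ ≤ ∫ x, (|deriv u x| * |v x| + |u x| * |deriv v x|) * (ε * K) := by
          apply integral_mono
          · exact (hint_g'F.abs).congr (Eventually.of_forall fun x => abs_mul _ _)
          · exact (((hint_u'v.abs.congr (Eventually.of_forall fun x =>
              (abs_mul _ _))).add ((hint_uv'.abs.congr (Eventually.of_forall fun x =>
              (abs_mul _ _))))).mul_const _)
          · intro x
            show |g' x| * |F x| ≤ (|deriv u x| * |v x| + |u x| * |deriv v x|) * (ε * K)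
            apply mul_le_mul
            · calc |g' x| ≤ |deriv u x * v x| + |u x * deriv v x| := abs_add_le _ _
                _ = |deriv u x| * |v x| + |u x| * |deriv v x| := by rw [abs_mul, abs_mul]
            · exact hFbdd x
            · exact abs_nonneg _
            · positivity
      _ = (∫ x, |deriv u x| * |v x| + |u x| * |deriv v x|) * (ε * K) := by
          rw [integral_mul_const]
      _ = ((∫ x, |deriv u x| * |v x|) + ∫ x, |u x| * |deriv v x|) * (ε * K) := by
          rw [integral_add (hint_u'v.abs.congr (Eventually.of_forall fun x => abs_mul _ _))
            (hint_uv'.abs.congr (Eventually.of_forall fun x => abs_mul _ _))]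
      _ ≤ (b * c + a * d) * (ε * K) := by
          apply mul_le_mul_of_nonneg_right _ (by positivity)
          exact add_le_add hH1 (by simpa using hH2)
      _ = ε * K * (b * c + a * d) := by ring
  rw [hgoal_eq, key, abs_neg]
  calc |∫ x, g' x * F x| ≤ ε * K * (b * c + a * d) := habs
    _ ≤ (K + 1) * ε * ((a + b) * (c + d)) := by
        have h1 : b * c + a * d ≤ (a + b) * (c + d) := by
          nlinarith [mul_nonneg ha hc, mul_nonneg hb hd]
        calc ε * K * (b * c + a * d) ≤ ε * K * ((a + b) * (c + d)) :=
              mul_le_mul_of_nonneg_left h1 (by positivity)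
          _ ≤ (K + 1) * ε * ((a + b) * (c + d)) := by
              apply mul_le_mul_of_nonneg_right _ (by positivity)
              nlinarith [hε.le, hK0]
    _ = (K + 1) * ε * (a + b) * (c + d) := by ring
end

section
/- Let e₁ : 𝕋 → ℝ be a bounded 1-periodic measurable function with zero mean against a weight (in particular e₁ bounded), α ∈ (0,2), and ψ ∈ C_c^∞(ℝ). Then the fractional Gagliardo pairing of the oscillating function vanishes in the limit: (1/2)∫ℝ∫ℝ (e₁(x/ε) − e₁(y/ε)) (ψ(x) − ψ(y)) |x−y|^{−(1+α)} dx dy → (1/2)∫ℝ∫ℝ ∫₀¹∫₀¹ (e₁(x') − e₁(y')) dx' dy' (ψ(x) − ψ(y)) |x−y|^{−(1+α)} dx dy = 0 as ε → 0, provided the double integral is restricted to |x|, |y| ≤ M with a uniformly small tail for large M. -/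
open MeasureTheory Real Filter Topology
open scoped ContDiff

/-- Key oscillation estimate: integrating a bounded measurable function with bounded
antiderivative, rescaled by `ε`, against a `C¹` compactly supported function is `O(ε)`. -/
lemma osc_bound {g : ℝ → ℝ} (hgm : Measurable g) {K B : ℝ}
    (hK : ∀ x, |g x| ≤ K)
    (hB : ∀ s t : ℝ, |∫ u in s..t, g u| ≤ B)
    {Φ : ℝ → ℝ} (hΦd : Differentiable ℝ Φ) (hΦ' : Continuous (deriv Φ))
    {R : ℝ} (hR : 0 ≤ R)
    (hsupp : ∀ x : ℝ, R < |x| → Φ x = 0) (hsupp' : ∀ x : ℝ, R < |x| → deriv Φ x = 0)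
    {ε : ℝ} (hε : 0 < ε) :
    |∫ x, g (x / ε) * Φ x| ≤ ε * B * ∫ t, |deriv Φ t| := by
  have hK0 : 0 ≤ K := le_trans (abs_nonneg _) (hK 0)
  have hB0 : 0 ≤ B := le_trans (abs_nonneg _) (hB 0 0)
  set S := R + 1 with hS
  have hRS : R < S := by simp [hS]
  have hS0 : 0 < S := by linarith
  set D := deriv Φ with hD
  have habs : ∀ x : ℝ, x ∉ Set.Icc (-S) S → S < |x| := by
    intro x hx
    rw [Set.mem_Icc, not_and_or, not_le, not_le] at hx
    rcases hx with hx | hx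
    · rw [abs_of_neg (by linarith)]; linarith
    · rw [abs_of_pos (by linarith)]; linarith
  have hΦS : ∀ x : ℝ, x ∉ Set.Icc (-S) S → Φ x = 0 :=
    fun x hx => hsupp x (hRS.trans (habs x hx))
  have hDS : ∀ x : ℝ, x ∉ Set.Icc (-S) S → D x = 0 :=
    fun x hx => hsupp' x (hRS.trans (habs x hx))
  have hDc : HasCompactSupport D :=
    HasCompactSupport.intro (isCompact_Icc (a := -S) (b := S)) hDS
  obtain ⟨M, hM⟩ : ∃ M, ∀ x, |D x| ≤ M := by
    obtain ⟨M, hM⟩ := hDc.exists_bound_of_continuous hΦ'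
    exact ⟨M, fun x => by simpa using hM x⟩
  have hM0 : 0 ≤ M := le_trans (abs_nonneg _) (hM 0)
  -- FTC
  have key : ∀ x : ℝ, Φ x = ∫ t in (-S)..x, D t := by
    intro x
    have h1 : ∫ t in (-S)..x, D t = Φ x - Φ (-S) :=
      intervalIntegral.integral_deriv_eq_sub (fun t _ => hΦd t) (hΦ'.intervalIntegrable _ _)
    have h2 : Φ (-S) = 0 := hsupp _ (by rw [abs_neg, abs_of_pos hS0]; exact hRS)
    rw [h1, h2, sub_zero]
  set μ := volume.restrict (Set.Icc (-S) S) with hμ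
  haveI : IsFiniteMeasure μ := by
    constructor
    rw [hμ, Measure.restrict_apply_univ]
    exact measure_Icc_lt_top
  have step1 : ∫ x, g (x / ε) * Φ x = ∫ x, g (x / ε) * Φ x ∂μ := by
    rw [hμ]
    exact (setIntegral_eq_integral_of_forall_compl_eq_zero
      (fun x hx => by rw [hΦS x hx, mul_zero])).symm
  set F : ℝ × ℝ → ℝ :=
    fun q => Set.indicator {q : ℝ × ℝ | q.2 ≤ q.1} (fun q => g (q.1 / ε) * D q.2) q with hF
  have hFmeas : Measurable F := by
    apply Measurable.indicator
    · exact (hgm.comp (measurable_fst.div_const ε)).mul (hΦ'.measurable.comp measurable_snd)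
    · exact measurableSet_le measurable_snd measurable_fst
  have hFbdd : ∀ q, |F q| ≤ K * M := by
    intro q
    by_cases hq : q ∈ {q : ℝ × ℝ | q.2 ≤ q.1}
    · have hFq : F q = g (q.1 / ε) * D q.2 := Set.indicator_of_mem hq _
      rw [hFq, abs_mul]
      exact mul_le_mul (hK _) (hM _) (abs_nonneg _) hK0
    · have hFq : F q = 0 := Set.indicator_of_notMem hq _
      rw [hFq, abs_zero]
      exact mul_nonneg hK0 hM0
  have hFint : Integrable F (μ.prod μ) := by
    refine (integrable_const (K * M)).mono' hFmeas.aestronglyMeasurable ?_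
    exact Eventually.of_forall fun q => by simpa using hFbdd q
  have inner_eq : ∀ x ∈ Set.Icc (-S) S, (∫ t, F (x, t) ∂μ) = g (x / ε) * Φ x := by
    intro x hx
    have hfun : (fun t => F (x, t)) =
        fun t => Set.indicator (Set.Iic x) (fun t => g (x / ε) * D t) t := by
      funext t
      simp only [hF, Set.indicator_apply, Set.mem_setOf_eq, Set.mem_Iic]
    rw [hfun, integral_indicator measurableSet_Iic, hμ,
      Measure.restrict_restrict measurableSet_Iic]
    have hset : Set.Iic x ∩ Set.Icc (-S) S = Set.Icc (-S) x := by
      ext t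
      simp only [Set.mem_inter_iff, Set.mem_Iic, Set.mem_Icc]
      constructor
      · rintro ⟨h1, h2, _⟩; exact ⟨h2, h1⟩
      · rintro ⟨h1, h2⟩; exact ⟨h2, h1, h2.trans hx.2⟩
    rw [hset, integral_const_mul, key x, intervalIntegral.integral_of_le hx.1,
      integral_Icc_eq_integral_Ioc]
  have step2 : ∫ x, g (x / ε) * Φ x ∂μ = ∫ x, (∫ t, F (x, t) ∂μ) ∂μ := by
    rw [hμ]
    exact setIntegral_congr_fun measurableSet_Icc (fun x hx => (inner_eq x hx).symm)
  have step3 : ∫ x, (∫ t, F (x, t) ∂μ) ∂μ = ∫ t, (∫ x, F (x, t) ∂μ) ∂μ :=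
    integral_integral_swap (f := fun x t => F (x, t)) hFint
  have inner_bd : ∀ t : ℝ, |∫ x, F (x, t) ∂μ| ≤ |D t| * (ε * B) := by
    intro t
    have hx_eq : (fun x => F (x, t)) =
        fun x => Set.indicator (Set.Ici t) (fun x => g (x / ε) * D t) x := by
      funext x
      simp only [hF, Set.indicator_apply, Set.mem_setOf_eq, Set.mem_Ici]
    rw [hx_eq, integral_indicator measurableSet_Ici, hμ,
      Measure.restrict_restrict measurableSet_Ici]
    have hset : Set.Ici t ∩ Set.Icc (-S) S = Set.Icc (max t (-S)) S := by
      ext y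
      simp only [Set.mem_inter_iff, Set.mem_Ici, Set.mem_Icc, max_le_iff]
      tauto
    rw [hset]
    set a := max t (-S) with ha
    rcases le_or_gt a S with haS | haS
    · rw [integral_mul_const, abs_mul]
      rw [mul_comm (|D t|) (ε * B)]
      apply mul_le_mul_of_nonneg_right _ (abs_nonneg (D t))
      have h1 : ∫ x in Set.Icc a S, g (x / ε) = ∫ x in a..S, g (x / ε) := by
        rw [intervalIntegral.integral_of_le haS, integral_Icc_eq_integral_Ioc]
      rw [h1, intervalIntegral.integral_comp_div (fun u => g u) (ne_of_gt hε)]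
      rw [smul_eq_mul, abs_mul, abs_of_pos hε]
      calc ε * |∫ u in a / ε..S / ε, g u| ≤ ε * B :=
            mul_le_mul_of_nonneg_left (hB _ _) hε.le
        _ = ε * B := rfl
    · rw [Set.Icc_eq_empty (not_le.mpr haS)]
      simp only [Measure.restrict_empty, integral_zero_measure, abs_zero]
      exact mul_nonneg (abs_nonneg _) (mul_nonneg hε.le hB0)
  have hDint : Integrable D := hΦ'.integrable_of_hasCompactSupport hDc
  have hDabs_int : Integrable (fun t => |D t| * (ε * B)) μ :=
    Integrable.mul_const (hDint.abs.restrict) _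
  calc |∫ x, g (x / ε) * Φ x| = |∫ t, (∫ x, F (x, t) ∂μ) ∂μ| := by
        rw [step1, step2, step3]
    _ ≤ ∫ t, |D t| * (ε * B) ∂μ := by
        have h := norm_integral_le_of_norm_le (f := fun t => ∫ x, F (x, t) ∂μ) (μ := μ)
          hDabs_int (Eventually.of_forall fun t => by
            rw [Real.norm_eq_abs]; exact inner_bd t)
        simpa [Real.norm_eq_abs] using h
    _ = (∫ t, |D t| ∂μ) * (ε * B) := integral_mul_const _ _
    _ ≤ (∫ t, |D t|) * (ε * B) := by
        apply mul_le_mul_of_nonneg_right _ (mul_nonneg hε.le hB0)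
        rw [hμ]
        exact setIntegral_le_integral hDint.abs (Eventually.of_forall fun t => abs_nonneg _)
    _ = ε * B * ∫ t, |D t| := by ring

/-- Second-order Taylor-type bound for the symmetric second difference. -/
lemma taylor_bound {ψ : ℝ → ℝ} (hψd : Differentiable ℝ ψ) (hψ'd : Differentiable ℝ (deriv ψ))
    {S₂ : ℝ} (hS₂ : ∀ x, |deriv (deriv ψ) x| ≤ S₂) (x h : ℝ) :
    |2 * ψ x - ψ (x + h) - ψ (x - h)| ≤ 2 * S₂ * h ^ 2 := by
  have hS₂0 : 0 ≤ S₂ := le_trans (abs_nonneg _) (hS₂ 0)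
  have lip : ∀ a b : ℝ, |deriv ψ a - deriv ψ b| ≤ S₂ * |a - b| := by
    intro a b
    have := Convex.norm_image_sub_le_of_norm_deriv_le (𝕜 := ℝ) (f := deriv ψ) (s := Set.univ)
      (fun y _ => hψ'd y) (fun y _ => by simpa using hS₂ y) convex_univ
      (Set.mem_univ b) (Set.mem_univ a)
    simpa [Real.norm_eq_abs] using this
  set θ : ℝ → ℝ := fun t => ψ (x + t) + ψ (x - t) with hθdef
  have hθ : ∀ t : ℝ, HasDerivAt θ (deriv ψ (x + t) - deriv ψ (x - t)) t := by
    intro t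
    have h1 : HasDerivAt (fun t : ℝ => ψ (x + t)) (deriv ψ (x + t)) t := by
      have := (hψd (x + t)).hasDerivAt.comp t ((hasDerivAt_id t).const_add x)
      simpa [Function.comp_def] using this
    have h2 : HasDerivAt (fun t : ℝ => ψ (x - t)) (-deriv ψ (x - t)) t := by
      have := (hψd (x - t)).hasDerivAt.comp t ((hasDerivAt_id t).const_sub x)
      simpa [Function.comp_def] using this
    have := h1.add h2
    exact this.congr_deriv (by ring)
  have hcont : Continuous (fun t : ℝ => deriv ψ (x + t) - deriv ψ (x - t)) := by
    have hc := hψ'd.continuous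
    exact (hc.comp (continuous_const.add continuous_id)).sub
      (hc.comp (continuous_const.sub continuous_id))
  have ftc : θ h - θ 0 = ∫ t in (0:ℝ)..h, (deriv ψ (x + t) - deriv ψ (x - t)) :=
    (intervalIntegral.integral_eq_sub_of_hasDerivAt (fun t _ => hθ t)
      (hcont.intervalIntegrable _ _)).symm
  have bnd : ∀ t ∈ Set.uIoc (0:ℝ) h, ‖deriv ψ (x + t) - deriv ψ (x - t)‖ ≤ S₂ * (2 * |h|) := by
    intro t ht
    have htabs : |t| ≤ |h| := by
      rcases Set.mem_uIoc.mp ht with ⟨h1, h2⟩ | ⟨h1, h2⟩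
      · rw [abs_of_pos h1]; exact le_trans h2 (le_abs_self h)
      · rw [abs_of_nonpos h2]
        have : -h ≤ |h| := neg_le_abs h
        linarith
    have hl := lip (x + t) (x - t)
    have heq : (x + t) - (x - t) = 2 * t := by ring
    rw [heq, abs_mul] at hl
    rw [Real.norm_eq_abs]
    calc |deriv ψ (x + t) - deriv ψ (x - t)| ≤ S₂ * (|2| * |t|) := hl
      _ ≤ S₂ * (2 * |h|) := by
          apply mul_le_mul_of_nonneg_left _ hS₂0
          rw [abs_two]
          exact mul_le_mul_of_nonneg_left htabs (by norm_num)
  have hmain := intervalIntegral.norm_integral_le_of_norm_le_const bnd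
  rw [← ftc] at hmain
  have heq2 : |2 * ψ x - ψ (x + h) - ψ (x - h)| = |θ h - θ 0| := by
    have : 2 * ψ x - ψ (x + h) - ψ (x - h) = -(θ h - θ 0) := by
      simp only [hθdef]
      ring
    rw [this, abs_neg]
  rw [heq2]
  calc |θ h - θ 0| ≤ S₂ * (2 * |h|) * |h - 0| := by simpa [Real.norm_eq_abs] using hmain
    _ = 2 * S₂ * (|h| * |h|) := by rw [sub_zero]; ring
    _ = 2 * S₂ * h ^ 2 := by rw [abs_mul_abs_self, ← pow_two]

set_option maxHeartbeats 2000000 in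
/-- Vanishing of the fractional Gagliardo pairing of an oscillating periodic
function against a fixed test function: for bounded measurable 1-periodic `e₁`,
`α ∈ (0,2)` and `ψ ∈ C_c^∞(ℝ)`,
`(1/2)∫∫ (e₁(x/ε) − e₁(y/ε))(ψ(x) − ψ(y))|x−y|^{−(1+α)} dx dy → 0` as `ε → 0⁺`,
the limit being the averaged pairing with mean difference
`∫₀¹∫₀¹ (e₁(x') − e₁(y')) dx' dy' = 0`. -/
theorem stmt_19 (α : ℝ) (hα : α ∈ Set.Ioo (0:ℝ) 2) (e₁ : ℝ → ℝ)
    (hep : Function.Periodic e₁ 1) (hem : Measurable e₁) (heb : ∃ C, ∀ y, |e₁ y| ≤ C)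
    (ψ : ℝ → ℝ) (hψ : ContDiff ℝ (⊤ : ℕ∞) ψ) (hψc : HasCompactSupport ψ) :
    Tendsto
      (fun ε : ℝ => (1 / 2) * ∫ p : ℝ × ℝ,
        (e₁ (p.1 / ε) - e₁ (p.2 / ε)) * (ψ p.1 - ψ p.2) / |p.1 - p.2| ^ (1 + α))
      (𝓝[>] 0)
      (𝓝 ((1 / 2) * ∫ p : ℝ × ℝ,
        (∫ x' in Set.Ioc (0:ℝ) 1, ∫ y' in Set.Ioc (0:ℝ) 1, (e₁ x' - e₁ y')) *
          (ψ p.1 - ψ p.2) / |p.1 - p.2| ^ (1 + α))) ∧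
    (1 / 2) * (∫ p : ℝ × ℝ,
        (∫ x' in Set.Ioc (0:ℝ) 1, ∫ y' in Set.Ioc (0:ℝ) 1, (e₁ x' - e₁ y')) *
          (ψ p.1 - ψ p.2) / |p.1 - p.2| ^ (1 + α)) = 0 := by
  obtain ⟨hα0, hα2⟩ := hα
  obtain ⟨C₀, hC₀⟩ := heb
  have hC₀0 : 0 ≤ C₀ := le_trans (abs_nonneg _) (hC₀ 0)
  -- interval integrability of e₁
  have heii : ∀ s t : ℝ, IntervalIntegrable e₁ volume s t := by
    intro s t
    rw [intervalIntegrable_iff]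
    refine Integrable.mono' (g := fun _ => C₀) ?_ hem.aestronglyMeasurable.restrict ?_
    · exact integrableOn_const measure_Ioc_lt_top.ne
    · exact Eventually.of_forall fun x => by simpa using hC₀ x
  have hIoc01 : IntegrableOn e₁ (Set.Ioc (0:ℝ) 1) := by
    have := heii 0 1
    rw [intervalIntegrable_iff, Set.uIoc_of_le zero_le_one] at this
    exact this
  have hvol01 : (volume (Set.Ioc (0:ℝ) 1)) = 1 := by
    rw [Real.volume_Ioc]; norm_num
  have hconst01 : IntegrableOn (fun _ : ℝ => (1:ℝ)) (Set.Ioc (0:ℝ) 1) := by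
    exact integrableOn_const (by rw [hvol01]; exact ENNReal.one_ne_top)
  set m : ℝ := ∫ x in Set.Ioc (0:ℝ) 1, e₁ x with hmdef
  have hm : |m| ≤ C₀ := by
    have h1 : ‖∫ x in Set.Ioc (0:ℝ) 1, e₁ x‖ ≤ C₀ * (volume (Set.Ioc (0:ℝ) 1)).toReal :=
      norm_setIntegral_le_of_norm_le_const (by rw [hvol01]; exact ENNReal.one_lt_top)
        (fun x _ => by simpa using hC₀ x)
    rw [hvol01] at h1
    simpa [hmdef] using h1
  -- the inner double average vanishes
  have hc : (∫ x' in Set.Ioc (0:ℝ) 1, ∫ y' in Set.Ioc (0:ℝ) 1, (e₁ x' - e₁ y')) = 0 := by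
    have hin : ∀ x' : ℝ, (∫ y' in Set.Ioc (0:ℝ) 1, (e₁ x' - e₁ y')) = e₁ x' - m := by
      intro x'
      rw [integral_sub (by simpa using hconst01.const_mul (e₁ x')) hIoc01]
      rw [setIntegral_const, measureReal_def, hvol01]
      simp [hmdef]
    have : (∫ x' in Set.Ioc (0:ℝ) 1, ∫ y' in Set.Ioc (0:ℝ) 1, (e₁ x' - e₁ y'))
        = ∫ x' in Set.Ioc (0:ℝ) 1, (e₁ x' - m) := by
      exact setIntegral_congr_fun measurableSet_Ioc (fun x' _ => hin x')
    rw [this, integral_sub hIoc01 (by simpa using hconst01.const_mul m)]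
    rw [setIntegral_const, measureReal_def, hvol01]
    simp [hmdef]
  refine ⟨?_, by rw [hc]; simp⟩
  -- first conjunct
  have hzero2 : (∫ p : ℝ × ℝ,
      (∫ x' in Set.Ioc (0:ℝ) 1, ∫ y' in Set.Ioc (0:ℝ) 1, (e₁ x' - e₁ y')) *
        (ψ p.1 - ψ p.2) / |p.1 - p.2| ^ (1 + α)) = 0 := by
    rw [hc]; simp
  rw [hzero2, mul_zero]
  -- g, its bounds and primitive bounds
  set g : ℝ → ℝ := fun y => e₁ y - m with hgdef
  have hgm : Measurable g := hem.sub measurable_const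
  have hgp : Function.Periodic g 1 := fun y => by simp only [hgdef, hep y]
  have hgK : ∀ x, |g x| ≤ 2 * C₀ := by
    intro x
    calc |e₁ x - m| ≤ |e₁ x| + |m| := abs_sub _ _
      _ ≤ C₀ + C₀ := add_le_add (hC₀ x) hm
      _ = 2 * C₀ := by ring
  have hgii : ∀ s t : ℝ, IntervalIntegrable g volume s t :=
    fun s t => (heii s t).sub intervalIntegrable_const
  have hg01 : ∫ u in (0:ℝ)..(1:ℝ), g u = 0 := by
    have : ∫ u in (0:ℝ)..(1:ℝ), g u
        = (∫ u in (0:ℝ)..(1:ℝ), e₁ u) - ∫ u in (0:ℝ)..(1:ℝ), (m : ℝ) :=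
      intervalIntegral.integral_sub (heii 0 1) intervalIntegrable_const
    rw [this, intervalIntegral.integral_const, intervalIntegral.integral_of_le zero_le_one]
    simp [hmdef]
  have hB : ∀ s t : ℝ, |∫ u in s..t, g u| ≤ 4 * C₀ := by
    have hP1 : ∀ t : ℝ, |∫ u in (0:ℝ)..t, g u| ≤ 2 * C₀ := by
      intro t
      have hper : Function.Periodic (fun t => ∫ u in (0:ℝ)..t, g u) 1 := by
        intro t
        show (∫ u in (0:ℝ)..(t + 1), g u) = ∫ u in (0:ℝ)..t, g u
        have h1 : ∫ u in (0:ℝ)..(t + 1), g u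
            = (∫ u in (0:ℝ)..t, g u) + ∫ u in t..(t + 1), g u :=
          (intervalIntegral.integral_add_adjacent_intervals (hgii 0 t) (hgii t (t + 1))).symm
        have h2 : ∫ u in t..(t + 1), g u = ∫ u in (0:ℝ)..((0:ℝ) + 1), g u :=
          hgp.intervalIntegral_add_eq t 0
        rw [h1, h2]
        simp [hg01]
      have hfr : ∫ u in (0:ℝ)..t, g u = ∫ u in (0:ℝ)..(Int.fract t), g u := by
        have h3 := hper.sub_int_mul_eq (x := t) (n := ⌊t⌋)
        simp only [mul_one] at h3
        rw [← h3]
        rfl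
      rw [hfr]
      have h0 : (0:ℝ) ≤ Int.fract t := Int.fract_nonneg t
      have h1' : Int.fract t ≤ 1 := (Int.fract_lt_one t).le
      have hb := intervalIntegral.norm_integral_le_of_norm_le_const (a := 0)
        (b := Int.fract t) (C := 2 * C₀) (f := g)
        (fun u _ => by rw [Real.norm_eq_abs]; exact hgK u)
      rw [Real.norm_eq_abs] at hb
      calc |∫ u in (0:ℝ)..(Int.fract t), g u| ≤ (2 * C₀) * |Int.fract t - 0| := hb
        _ ≤ 2 * C₀ := by
            rw [sub_zero, abs_of_nonneg h0]
            nlinarith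
    intro s t
    have hsplit := intervalIntegral.integral_add_adjacent_intervals (hgii 0 s) (hgii s t)
    have h1 := hP1 s
    have h2 := hP1 t
    have h3 : ∫ u in s..t, g u = (∫ u in (0:ℝ)..t, g u) - ∫ u in (0:ℝ)..s, g u := by
      linarith [hsplit]
    rw [h3]
    calc |(∫ u in (0:ℝ)..t, g u) - ∫ u in (0:ℝ)..s, g u|
        ≤ |∫ u in (0:ℝ)..t, g u| + |∫ u in (0:ℝ)..s, g u| := abs_sub _ _
      _ ≤ 4 * C₀ := by linarith
  -- ψ facts
  have hψinf : ContDiff ℝ ∞ ψ := hψ.of_le (by simp)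
  have hψd : Differentiable ℝ ψ := hψinf.differentiable (by norm_num)
  have hψ'cd : ContDiff ℝ ∞ (deriv ψ) := (contDiff_infty_iff_deriv.mp hψinf).2
  have hψ'd : Differentiable ℝ (deriv ψ) := hψ'cd.differentiable (by norm_num)
  have hψ''c : Continuous (deriv (deriv ψ)) :=
    ((contDiff_infty_iff_deriv.mp hψ'cd).2).continuous
  have hψc' : HasCompactSupport (deriv ψ) := hψc.deriv
  have hψc'' : HasCompactSupport (deriv (deriv ψ)) := hψc'.deriv
  obtain ⟨S₂, hS₂⟩ : ∃ S₂, ∀ x, |deriv (deriv ψ) x| ≤ S₂ := by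
    obtain ⟨Cb, hCb⟩ := hψc''.exists_bound_of_continuous hψ''c
    exact ⟨Cb, fun x => by simpa using hCb x⟩
  have hS₂0 : 0 ≤ S₂ := le_trans (abs_nonneg _) (hS₂ 0)
  obtain ⟨R, hR0, hRtsupp⟩ : ∃ R : ℝ, 0 < R ∧ ∀ x : ℝ, R < |x| → x ∉ tsupport ψ := by
    obtain ⟨R, hR⟩ := hψc.isBounded.subset_closedBall 0
    refine ⟨max R 1, lt_of_lt_of_le one_pos (le_max_right _ _), fun x hx hmem => ?_⟩
    have h1 := hR hmem
    rw [Metric.mem_closedBall, Real.dist_eq, sub_zero] at h1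
    have : |x| ≤ max R 1 := le_trans h1 (le_max_left _ _)
    linarith
  have hψz : ∀ x : ℝ, R < |x| → ψ x = 0 :=
    fun x hx => image_eq_zero_of_notMem_tsupport (hRtsupp x hx)
  have htsub1 : tsupport (deriv ψ) ⊆ tsupport ψ :=
    closure_minimal (support_deriv_subset) (isClosed_tsupport ψ)
  have hψ'z : ∀ x : ℝ, R < |x| → deriv ψ x = 0 := by
    intro x hx
    exact image_eq_zero_of_notMem_tsupport (fun hmem => hRtsupp x hx (htsub1 hmem))
  have hψint : Integrable ψ := hψinf.continuous.integrable_of_hasCompactSupport hψc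
  have hψ'int : Integrable (deriv ψ) := hψ'cd.continuous.integrable_of_hasCompactSupport hψc'
  set Lψ : ℝ := ∫ t, |ψ t| with hLψdef
  set L₁ : ℝ := ∫ t, |deriv ψ t| with hL₁def
  have hLψ0 : 0 ≤ Lψ := integral_nonneg fun t => abs_nonneg _
  have hL₁0 : 0 ≤ L₁ := integral_nonneg fun t => abs_nonneg _
  -- constants
  set A : ℝ := 4 * C₀ * Lψ with hAdef
  set C₂ : ℝ := (2 * C₀) * (2 * S₂) * (2 * (R + 1)) with hC₂def
  set C₄ : ℝ := (4 * C₀) * (4 * L₁) with hC₄def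
  have hA0 : 0 ≤ A := by positivity
  have hC₂0 : 0 ≤ C₂ := by positivity
  have hC₄0 : 0 ≤ C₄ := by positivity
  -- translated integrands
  have htr : ∀ c : ℝ, Integrable (fun x : ℝ => ψ (x + c)) :=
    fun c => hψint.comp_add_right c
  have htr' : ∀ c : ℝ, Integrable (fun x : ℝ => deriv ψ (x + c)) :=
    fun c => hψ'int.comp_add_right c
  -- Φ h
  set Φ : ℝ → ℝ → ℝ := fun h x => 2 * ψ x - ψ (x + h) - ψ (x - h) with hΦdef
  have hshiftd : ∀ (c : ℝ) (x : ℝ), HasDerivAt (fun x : ℝ => ψ (x + c)) (deriv ψ (x + c)) x := by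
    intro c x
    have := (hψd (x + c)).hasDerivAt.comp x ((hasDerivAt_id x).add_const c)
    simpa [Function.comp_def] using this
  have hΦhd : ∀ h : ℝ, ∀ x : ℝ, HasDerivAt (Φ h)
      (2 * deriv ψ x - deriv ψ (x + h) - deriv ψ (x - h)) x := by
    intro h x
    have h1 : HasDerivAt (fun x : ℝ => 2 * ψ x) (2 * deriv ψ x) x :=
      ((hψd x).hasDerivAt).const_mul 2
    have h2 := hshiftd h x
    have h3 : HasDerivAt (fun x : ℝ => ψ (x - h)) (deriv ψ (x - h)) x := by
      have := hshiftd (-h) x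
      simpa [sub_eq_add_neg] using this
    exact (h1.sub h2).sub h3
  have hΦderiv : ∀ h : ℝ, deriv (Φ h)
      = fun x => 2 * deriv ψ x - deriv ψ (x + h) - deriv ψ (x - h) :=
    fun h => funext fun x => (hΦhd h x).deriv
  have hΦdiff : ∀ h : ℝ, Differentiable ℝ (Φ h) :=
    fun h x => (hΦhd h x).differentiableAt
  -- N and its properties
  set N : ℝ → ℝ → ℝ :=
    fun ε h => ∫ x, (e₁ (x / ε) - e₁ ((x + h) / ε)) * (ψ x - ψ (x + h)) with hNdef
  have hebd : ∀ (ε h : ℝ), ∀ x : ℝ, |e₁ (x / ε) - e₁ ((x + h) / ε)| ≤ 2 * C₀ := by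
    intro ε h x
    calc |e₁ (x / ε) - e₁ ((x + h) / ε)| ≤ |e₁ (x / ε)| + |e₁ ((x + h) / ε)| := abs_sub _ _
      _ ≤ C₀ + C₀ := add_le_add (hC₀ _) (hC₀ _)
      _ = 2 * C₀ := by ring
  have heframe : ∀ (ε h : ℝ), AEStronglyMeasurable
      (fun x : ℝ => e₁ (x / ε) - e₁ ((x + h) / ε)) volume := by
    intro ε h
    exact ((hem.comp (measurable_id.div_const ε)).sub
      (hem.comp ((measurable_id.add_const h).div_const ε))).aestronglyMeasurable
  have hNint : ∀ ε h : ℝ, Integrable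
      (fun x => (e₁ (x / ε) - e₁ ((x + h) / ε)) * (ψ x - ψ (x + h))) := by
    intro ε h
    refine Integrable.bdd_mul (hψint.sub (htr h)) (heframe ε h) (c := 2 * C₀) (Eventually.of_forall fun x => ?_)
    rw [Real.norm_eq_abs]
    exact hebd ε h x
  have hgmul : ∀ (u : ℝ → ℝ), Integrable u → ∀ ε : ℝ,
      Integrable (fun x => g (x / ε) * u x) := by
    intro u hu ε
    refine hu.bdd_mul ((hgm.comp (measurable_id.div_const ε)).aestronglyMeasurable)
      (c := 2 * C₀) (Eventually.of_forall fun x => ?_)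
    rw [Real.norm_eq_abs]
    exact hgK _
  have hNsym : ∀ ε h : ℝ, N ε h = ∫ x, g (x / ε) * Φ h x := by
    intro ε h
    have e1 : ∀ a b : ℝ, e₁ a - e₁ b = g a - g b := fun a b => by
      simp only [hgdef]; ring
    have int1 : Integrable (fun x => g (x / ε) * (ψ x - ψ (x + h))) :=
      hgmul _ (hψint.sub (htr h)) ε
    have int2 : Integrable (fun x => g ((x + h) / ε) * (ψ x - ψ (x + h))) := by
      refine (hψint.sub (htr h)).bdd_mul
        ((hgm.comp ((measurable_id.add_const h).div_const ε)).aestronglyMeasurable)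
        (c := 2 * C₀) (Eventually.of_forall fun x => ?_)
      rw [Real.norm_eq_abs]; exact hgK _
    have int3 : Integrable (fun x => g (x / ε) * (ψ (x - h) - ψ x)) := by
      have : Integrable (fun x : ℝ => ψ (x - h)) := by
        have := htr (-h)
        simpa [sub_eq_add_neg] using this
      exact hgmul _ (this.sub hψint) ε
    calc N ε h = ∫ x, (g (x / ε) * (ψ x - ψ (x + h)) - g ((x + h) / ε) * (ψ x - ψ (x + h))) := by
          simp only [hNdef]
          congr 1
          funext x
          rw [e1]; ring
      _ = (∫ x, g (x / ε) * (ψ x - ψ (x + h))) - ∫ x, g ((x + h) / ε) * (ψ x - ψ (x + h)) :=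
          integral_sub int1 int2
      _ = (∫ x, g (x / ε) * (ψ x - ψ (x + h))) - ∫ x, g (x / ε) * (ψ (x - h) - ψ x) := by
          congr 1
          have h4 := integral_add_right_eq_self
            (μ := (volume : Measure ℝ)) (fun x => g (x / ε) * (ψ (x - h) - ψ x)) h
          rw [← h4]
          congr 1
          funext x
          simp [add_sub_cancel_right]
      _ = ∫ x, g (x / ε) * Φ h x := by
          rw [← integral_sub int1 int3]
          congr 1
          funext x
          simp only [hΦdef]
          ring
  -- bound by A
  have hNA : ∀ ε h : ℝ, |N ε h| ≤ A := by
    intro ε h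
    have hbd : Integrable (fun x : ℝ => (2 * C₀) * (|ψ x| + |ψ (x + h)|)) :=
      ((hψint.abs.add (htr h).abs).const_mul (2 * C₀))
    have h1 : |N ε h| ≤ ∫ x, (2 * C₀) * (|ψ x| + |ψ (x + h)|) := by
      have := norm_integral_le_of_norm_le
        (f := fun x => (e₁ (x / ε) - e₁ ((x + h) / ε)) * (ψ x - ψ (x + h))) hbd
        (Eventually.of_forall fun x => by
          rw [Real.norm_eq_abs, abs_mul]
          refine mul_le_mul (hebd ε h x) ?_ (abs_nonneg _) (by linarith)
          exact abs_sub _ _)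
      simpa [hNdef, Real.norm_eq_abs] using this
    have h2 : ∫ x, (2 * C₀) * (|ψ x| + |ψ (x + h)|) = A := by
      have i1 : Integrable (fun x : ℝ => |ψ x|) := hψint.abs
      have i2 : Integrable (fun x : ℝ => |ψ (x + h)|) := (htr h).abs
      rw [integral_const_mul, integral_add i1 i2]
      have h3 : ∫ x, |ψ (x + h)| = Lψ := by
        rw [hLψdef]
        exact integral_add_right_eq_self (μ := (volume : Measure ℝ)) (fun x => |ψ x|) h
      rw [h3, hLψdef, hAdef]
      ring
    rw [← h2]
    exact h1
  -- quadratic bound near 0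
  have hN2 : ∀ ε h : ℝ, |h| ≤ 1 → |N ε h| ≤ C₂ * h ^ 2 := by
    intro ε h hh
    rw [hNsym]
    have hzero : ∀ x : ℝ, x ∉ Set.Icc (-(R + 1)) (R + 1) → g (x / ε) * Φ h x = 0 := by
      intro x hx
      have habsx : R + 1 < |x| := by
        rw [Set.mem_Icc, not_and_or, not_le, not_le] at hx
        rcases hx with hx | hx
        · rw [abs_of_neg (by linarith)]; linarith
        · rw [abs_of_pos (by linarith)]; linarith
      have h1 : ψ x = 0 := hψz x (by linarith)
      have h2 : ψ (x + h) = 0 := by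
        apply hψz
        have := abs_sub_abs_le_abs_sub x (-h)
        simp only [sub_neg_eq_add] at this
        rw [abs_neg] at this
        linarith
      have h3 : ψ (x - h) = 0 := by
        apply hψz
        have := abs_sub_abs_le_abs_sub x h
        have habs2 : |x| - |h| ≤ |x - h| := this
        linarith
      simp only [hΦdef, h1, h2, h3]
      ring
    rw [← setIntegral_eq_integral_of_forall_compl_eq_zero hzero]
    have hbd : ∀ x ∈ Set.Icc (-(R + 1)) (R + 1),
        ‖g (x / ε) * Φ h x‖ ≤ (2 * C₀) * (2 * S₂ * h ^ 2) := by
      intro x _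
      rw [Real.norm_eq_abs, abs_mul]
      refine mul_le_mul (hgK _) ?_ (abs_nonneg _) (by linarith)
      exact taylor_bound hψd hψ'd hS₂ x h
    have hmτ := norm_setIntegral_le_of_norm_le_const (μ := volume)
      (s := Set.Icc (-(R + 1)) (R + 1)) measure_Icc_lt_top hbd
    have hvol : (volume (Set.Icc (-(R + 1)) (R + 1))).toReal = 2 * (R + 1) := by
      rw [Real.volume_Icc]
      rw [ENNReal.toReal_ofReal (by linarith)]
      ring
    rw [Real.norm_eq_abs] at hmτ
    calc |∫ x in Set.Icc (-(R + 1)) (R + 1), g (x / ε) * Φ h x|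
        ≤ (2 * C₀) * (2 * S₂ * h ^ 2) * (volume (Set.Icc (-(R + 1)) (R + 1))).toReal := hmτ
      _ = C₂ * h ^ 2 := by rw [hvol, hC₂def]; ring
  -- oscillation bound
  have hN4 : ∀ ε h : ℝ, 0 < ε → |N ε h| ≤ ε * C₄ := by
    intro ε h hε
    rw [hNsym]
    have hΦcont' : Continuous (deriv (Φ h)) := by
      rw [hΦderiv]
      have hc := hψ'cd.continuous
      exact ((continuous_const.mul hc).sub (hc.comp (continuous_id.add continuous_const))).sub
        (hc.comp (continuous_id.sub continuous_const))
    have hsupp : ∀ x : ℝ, R + |h| < |x| → Φ h x = 0 := by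
      intro x hx
      have h1 : ψ x = 0 := hψz x (by have := abs_nonneg h; linarith)
      have h2 : ψ (x + h) = 0 := by
        apply hψz
        have := abs_sub_abs_le_abs_sub x (-h)
        simp only [sub_neg_eq_add] at this
        rw [abs_neg] at this
        linarith
      have h3 : ψ (x - h) = 0 := by
        apply hψz
        have := abs_sub_abs_le_abs_sub x h
        linarith
      simp only [hΦdef, h1, h2, h3]
      ring
    have hsupp' : ∀ x : ℝ, R + |h| < |x| → deriv (Φ h) x = 0 := by
      intro x hx
      rw [hΦderiv]
      have h1 : deriv ψ x = 0 := hψ'z x (by have := abs_nonneg h; linarith)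
      have h2 : deriv ψ (x + h) = 0 := by
        apply hψ'z
        have := abs_sub_abs_le_abs_sub x (-h)
        simp only [sub_neg_eq_add] at this
        rw [abs_neg] at this
        linarith
      have h3 : deriv ψ (x - h) = 0 := by
        apply hψ'z
        have := abs_sub_abs_le_abs_sub x h
        linarith
      simp only [h1, h2, h3]
      ring
    have hosc := osc_bound hgm hgK hB (hΦdiff h) hΦcont'
      (R := R + |h|) (by have := abs_nonneg h; linarith) hsupp hsupp' hε
    have hL : ∫ t, |deriv (Φ h) t| ≤ 4 * L₁ := by
      have hΦ'int : Integrable (deriv (Φ h)) := by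
        rw [hΦderiv]
        refine ((hψ'int.const_mul 2).sub (htr' h)).sub ?_
        have := htr' (-h)
        simpa [sub_eq_add_neg] using this
      have hrhsint : Integrable
          (fun t : ℝ => 2 * |deriv ψ t| + |deriv ψ (t + h)| + |deriv ψ (t - h)|) := by
        refine ((hψ'int.abs.const_mul 2).add (htr' h).abs).add ?_
        have : Integrable (fun t : ℝ => deriv ψ (t - h)) := by
          have := htr' (-h)
          simpa [sub_eq_add_neg] using this
        exact this.abs
      have h5 : ∫ t, |deriv (Φ h) t|
          ≤ ∫ t, (2 * |deriv ψ t| + |deriv ψ (t + h)| + |deriv ψ (t - h)|) := by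
        refine integral_mono hΦ'int.abs hrhsint fun t => ?_
        rw [hΦderiv]
        calc |2 * deriv ψ t - deriv ψ (t + h) - deriv ψ (t - h)|
            ≤ |2 * deriv ψ t - deriv ψ (t + h)| + |deriv ψ (t - h)| := abs_sub _ _
          _ ≤ (|2 * deriv ψ t| + |deriv ψ (t + h)|) + |deriv ψ (t - h)| :=
              add_le_add (abs_sub _ _) le_rfl
          _ = 2 * |deriv ψ t| + |deriv ψ (t + h)| + |deriv ψ (t - h)| := by
              rw [abs_mul, abs_two]
      have h6 : ∫ t, (2 * |deriv ψ t| + |deriv ψ (t + h)| + |deriv ψ (t - h)|) = 4 * L₁ := by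
        have i1 : Integrable (fun t : ℝ => 2 * |deriv ψ t|) := hψ'int.abs.const_mul 2
        have i2 : Integrable (fun t : ℝ => |deriv ψ (t + h)|) := (htr' h).abs
        have i3 : Integrable (fun t : ℝ => |deriv ψ (t - h)|) := by
          have : Integrable (fun t : ℝ => deriv ψ (t - h)) := by
            have := htr' (-h)
            simpa [sub_eq_add_neg] using this
          exact this.abs
        have i12 : Integrable (fun t : ℝ => 2 * |deriv ψ t| + |deriv ψ (t + h)|) := i1.add i2
        rw [integral_add i12 i3, integral_add i1 i2, integral_const_mul]
        have e2 : ∫ t, |deriv ψ (t + h)| = L₁ := by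
          rw [hL₁def]
          exact integral_add_right_eq_self (μ := (volume : Measure ℝ)) (fun t => |deriv ψ t|) h
        have e3 : ∫ t, |deriv ψ (t - h)| = L₁ := by
          rw [hL₁def]
          have := integral_add_right_eq_self (μ := (volume : Measure ℝ)) (fun t => |deriv ψ t|) (-h)
          simpa [sub_eq_add_neg] using this
        rw [e2, e3, hL₁def]
        ring
      rw [← h6]
      exact h5
    calc |∫ x, g (x / ε) * Φ h x| ≤ ε * (4 * C₀) * ∫ t, |deriv (Φ h) t| := hosc
      _ ≤ ε * (4 * C₀) * (4 * L₁) := by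
          refine mul_le_mul_of_nonneg_left hL (by positivity)
      _ = ε * C₄ := by rw [hC₄def]; ring
  -- dominating functions
  have hβ1 : (1:ℝ) < 1 + α := by linarith
  set DD : ℝ → ℝ := fun h => (if |h| ≤ 1 then C₂ * h ^ 2 else A) / |h| ^ (1 + α) with hDDdef
  set DE : ℝ → ℝ → ℝ := fun ε h =>
    (if |h| ≤ 1 then min (C₂ * h ^ 2) (ε * C₄) else min A (ε * C₄)) / |h| ^ (1 + α) with hDEdef
  have hrnn : ∀ h : ℝ, (0:ℝ) ≤ |h| ^ (1 + α) := fun h => rpow_nonneg (abs_nonneg h) _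
  have hDDnn : ∀ h, 0 ≤ DD h := by
    intro h
    refine div_nonneg ?_ (hrnn h)
    split
    · positivity
    · exact hA0
  have hDEnn : ∀ ε : ℝ, 0 ≤ ε → ∀ h, 0 ≤ DE ε h := by
    intro ε hε h
    refine div_nonneg ?_ (hrnn h)
    split
    · exact le_min (by positivity) (by positivity)
    · exact le_min hA0 (by positivity)
  have hDEle : ∀ ε : ℝ, ∀ h, DE ε h ≤ DD h := by
    intro ε h
    simp only [hDEdef, hDDdef]
    by_cases h0 : h = 0
    · subst h0
      rw [abs_zero, Real.zero_rpow (by positivity), div_zero, div_zero]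
    · have hden : (0:ℝ) < |h| ^ (1 + α) := rpow_pos_of_pos (abs_pos.mpr h0) _
      apply (div_le_div_iff_of_pos_right hden).mpr
      split_ifs
      · exact min_le_left _ _
      · exact min_le_left _ _

  have hDDmeas : Measurable DD := by
    apply Measurable.div
    · exact Measurable.ite (measurableSet_le continuous_abs.measurable measurable_const)
        ((measurable_id.pow_const 2).const_mul C₂) measurable_const
    · exact (continuous_abs.rpow_const (fun x => Or.inr (by linarith))).measurable
  have hDEmeas : ∀ ε : ℝ, Measurable (DE ε) := by
    intro ε
    apply Measurable.div
    · exact Measurable.ite (measurableSet_le continuous_abs.measurable measurable_const)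
        (((measurable_id.pow_const 2).const_mul C₂).min measurable_const)
        (measurable_const.min measurable_const)
    · exact (continuous_abs.rpow_const (fun x => Or.inr (by linarith))).measurable
  have hDDint : Integrable DD := by
    have hIoi : IntegrableOn DD (Set.Ioi (0:ℝ)) := by
      have h1 : IntegrableOn DD (Set.Ioc (0:ℝ) 1) := by
        have hk : IntervalIntegrable (fun h : ℝ => h ^ ((1:ℝ) - α)) volume 0 1 :=
          intervalIntegral.intervalIntegrable_rpow' (by linarith)
        have hk' : IntegrableOn (fun h : ℝ => h ^ ((1:ℝ) - α)) (Set.Ioc (0:ℝ) 1) := by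
          rwa [intervalIntegrable_iff, Set.uIoc_of_le zero_le_one] at hk
        have hk'' : IntegrableOn (fun h : ℝ => C₂ * h ^ ((1:ℝ) - α)) (Set.Ioc (0:ℝ) 1) :=
          hk'.const_mul C₂
        refine hk''.congr_fun ?_ measurableSet_Ioc
        intro x hx
        obtain ⟨hx0, hx1⟩ := hx
        show C₂ * x ^ ((1:ℝ) - α) = DD x
        have habs : |x| = x := abs_of_pos hx0
        simp only [hDDdef]
        rw [habs, if_pos hx1]
        rw [eq_div_iff (ne_of_gt (rpow_pos_of_pos hx0 (1 + α)))]
        rw [mul_assoc, ← rpow_add hx0]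
        rw [show (1:ℝ) - α + (1 + α) = (2:ℝ) by ring]
        rw [show ((2:ℝ)) = ((2:ℕ):ℝ) by norm_num, rpow_natCast]
      have h2 : IntegrableOn DD (Set.Ioi (1:ℝ)) := by
        have hk : IntegrableOn (fun h : ℝ => h ^ (-(1 + α))) (Set.Ioi (1:ℝ)) :=
          integrableOn_Ioi_rpow_of_lt (by linarith) one_pos
        have hk'' : IntegrableOn (fun h : ℝ => A * h ^ (-(1 + α))) (Set.Ioi (1:ℝ)) :=
          hk.const_mul A
        refine hk''.congr_fun ?_ measurableSet_Ioi
        intro x hx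
        have hx1 : (1:ℝ) < x := hx
        show A * x ^ (-(1 + α)) = DD x
        have habs : |x| = x := abs_of_pos (by linarith)
        simp only [hDDdef]
        rw [habs, if_neg (by linarith)]
        rw [rpow_neg (by linarith : (0:ℝ) ≤ x), div_eq_mul_inv]
      have h3 := h1.union h2
      rwa [Set.Ioc_union_Ioi_eq_Ioi zero_le_one] at h3
    set G : ℝ → ℝ := Set.indicator (Set.Ioi (0:ℝ)) DD with hGdef
    have hGint : Integrable G := by
      rw [hGdef, integrable_indicator_iff measurableSet_Ioi]
      exact hIoi
    have hae : ∀ᵐ h : ℝ, h ≠ 0 := by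
      rw [ae_iff]
      have hset : {h : ℝ | ¬ h ≠ 0} = {0} := by ext h; simp
      rw [hset]
      exact measure_singleton 0
    refine (hGint.add hGint.comp_neg).congr ?_
    filter_upwards [hae] with h hh
    have heven : DD (-h) = DD h := by
      simp only [hDDdef, abs_neg, neg_sq]
    rcases lt_or_gt_of_ne hh with hlt | hgt
    · have g1 : G h = 0 := Set.indicator_of_notMem (by simp only [Set.mem_Ioi]; linarith) _
      have g2 : G (-h) = DD (-h) :=
        Set.indicator_of_mem (by simp only [Set.mem_Ioi]; linarith) _
      show G h + G (-h) = DD h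
      rw [g1, g2, heven, zero_add]
    · have g1 : G h = DD h := Set.indicator_of_mem (by simpa [Set.mem_Ioi]) _
      have g2 : G (-h) = 0 :=
        Set.indicator_of_notMem (by simp only [Set.mem_Ioi]; linarith) _
      show G h + G (-h) = DD h
      rw [g1, g2, add_zero]
  have hDEint : ∀ ε : ℝ, 0 < ε → Integrable (DE ε) := by
    intro ε hε
    refine hDDint.mono' (hDEmeas ε).aestronglyMeasurable (Eventually.of_forall fun h => ?_)
    rw [Real.norm_eq_abs, abs_of_nonneg (hDEnn ε hε.le h)]
    exact hDEle ε h
  have hae0 : ∀ᵐ h : ℝ, h ≠ 0 := by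
    rw [ae_iff]
    have hset : {h : ℝ | ¬ h ≠ 0} = {0} := by ext h; simp
    rw [hset]
    exact measure_singleton 0
  have hW : Tendsto (fun ε => ∫ h, DE ε h) (𝓝[>] (0:ℝ)) (𝓝 0) := by
    have h0 : Tendsto (fun ε => ∫ h, DE ε h) (𝓝[>] (0:ℝ)) (𝓝 (∫ _ : ℝ, (0:ℝ))) := by
      apply tendsto_integral_filter_of_dominated_convergence DD
      · exact Eventually.of_forall fun ε => (hDEmeas ε).aestronglyMeasurable
      · filter_upwards [self_mem_nhdsWithin] with ε hε
        refine Eventually.of_forall fun h => ?_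
        rw [Real.norm_eq_abs, abs_of_nonneg (hDEnn ε (le_of_lt hε) h)]
        exact hDEle ε h
      · exact hDDint
      · filter_upwards [hae0] with h hh
        have hden : (0:ℝ) < |h| ^ (1 + α) := rpow_pos_of_pos (abs_pos.mpr hh) _
        have hup : Tendsto (fun ε : ℝ => ε * C₄ / |h| ^ (1 + α)) (𝓝[>] (0:ℝ)) (𝓝 0) := by
          have hcont : Continuous (fun ε : ℝ => ε * C₄ / |h| ^ (1 + α)) :=
            (continuous_id.mul continuous_const).div_const _
          have h00 := hcont.tendsto 0
          simp only [zero_mul, zero_div] at h00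
          exact h00.mono_left nhdsWithin_le_nhds
        refine tendsto_of_tendsto_of_tendsto_of_le_of_le' tendsto_const_nhds hup ?_ ?_
        · filter_upwards [self_mem_nhdsWithin] with ε hε
          exact hDEnn ε (le_of_lt hε) h
        · filter_upwards [self_mem_nhdsWithin] with ε hε
          simp only [hDEdef]
          apply (div_le_div_iff_of_pos_right hden).mpr
          split_ifs
          · exact min_le_right _ _
          · exact min_le_right _ _
    simpa using h0
  have keyineq : ∀ ε : ℝ, 0 < ε →
      |∫ p : ℝ × ℝ, (e₁ (p.1 / ε) - e₁ (p.2 / ε)) * (ψ p.1 - ψ p.2) / |p.1 - p.2| ^ (1 + α)|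
        ≤ ∫ h, DE ε h := by
    intro ε hε
    have hWnn : 0 ≤ ∫ h, DE ε h := integral_nonneg (hDEnn ε hε.le)
    set f : ℝ × ℝ → ℝ :=
      fun p => (e₁ (p.1 / ε) - e₁ (p.2 / ε)) * (ψ p.1 - ψ p.2) / |p.1 - p.2| ^ (1 + α)
      with hfdef
    by_cases hInt : Integrable f (volume : Measure (ℝ × ℝ))
    · have hmp : MeasurePreserving (fun z : ℝ × ℝ => (z.1, z.1 + z.2))
          ((volume : Measure ℝ).prod volume) ((volume : Measure ℝ).prod volume) :=
        measurePreserving_prod_add volume volume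
      have hemb : MeasurableEmbedding (fun z : ℝ × ℝ => (z.1, z.1 + z.2)) :=
        (MeasurableEquiv.shearAddRight ℝ).measurableEmbedding
      have hInt' : Integrable f ((volume : Measure ℝ).prod volume) := by
        rwa [← Measure.volume_eq_prod]
      have hIntT : Integrable (fun z : ℝ × ℝ => f (z.1, z.1 + z.2))
          ((volume : Measure ℝ).prod volume) := (hmp.integrable_comp_emb hemb).mpr hInt'
      have heq : ∫ p : ℝ × ℝ, f p = ∫ h : ℝ, ∫ x : ℝ, f (x, x + h) := by
        calc ∫ p : ℝ × ℝ, f p = ∫ p : ℝ × ℝ, f p ∂((volume : Measure ℝ).prod volume) := by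
              rw [← Measure.volume_eq_prod]
          _ = ∫ z : ℝ × ℝ, f (z.1, z.1 + z.2) ∂((volume : Measure ℝ).prod volume) :=
              (hmp.integral_comp hemb f).symm
          _ = ∫ x : ℝ, ∫ h : ℝ, f (x, x + h) := integral_prod _ hIntT
          _ = ∫ h : ℝ, ∫ x : ℝ, f (x, x + h) :=
              integral_integral_swap (f := fun x h => f (x, x + h)) hIntT
      rw [heq]
      have hbound : ∀ᵐ h : ℝ, ‖∫ x : ℝ, f (x, x + h)‖ ≤ DE ε h := by
        filter_upwards [hae0] with h hh
        have hfx : (fun x => f (x, x + h))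
            = fun x => ((e₁ (x / ε) - e₁ ((x + h) / ε)) * (ψ x - ψ (x + h))) / |h| ^ (1 + α) := by
          funext x
          simp only [hfdef]
          have hxy : x - (x + h) = -h := by ring
          rw [hxy, abs_neg]
        rw [hfx, integral_div, Real.norm_eq_abs, abs_div, abs_of_nonneg (hrnn h)]
        simp only [hDEdef]
        apply (div_le_div_iff_of_pos_right (rpow_pos_of_pos (abs_pos.mpr hh) _)).mpr
        split_ifs with h1
        · exact le_min (hN2 ε h h1) (hN4 ε h hε)
        · exact le_min (hNA ε h) (hN4 ε h hε)
      have hfin := norm_integral_le_of_norm_le (hDEint ε hε) hbound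
      rw [Real.norm_eq_abs] at hfin
      exact hfin
    · rw [integral_undef hInt]
      simpa using hWnn
  apply squeeze_zero_norm' ?_ hW
  filter_upwards [self_mem_nhdsWithin] with ε hε
  have hk := keyineq ε hε
  have habs12 : |(1:ℝ) / 2| ≤ 1 := by rw [abs_of_nonneg] <;> norm_num
  calc ‖(1:ℝ) / 2 * ∫ p : ℝ × ℝ,
        (e₁ (p.1 / ε) - e₁ (p.2 / ε)) * (ψ p.1 - ψ p.2) / |p.1 - p.2| ^ (1 + α)‖
      = |(1:ℝ) / 2| * |∫ p : ℝ × ℝ,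
        (e₁ (p.1 / ε) - e₁ (p.2 / ε)) * (ψ p.1 - ψ p.2) / |p.1 - p.2| ^ (1 + α)| := by
        rw [Real.norm_eq_abs, abs_mul]
    _ ≤ 1 * |∫ p : ℝ × ℝ,
        (e₁ (p.1 / ε) - e₁ (p.2 / ε)) * (ψ p.1 - ψ p.2) / |p.1 - p.2| ^ (1 + α)| :=
        mul_le_mul_of_nonneg_right habs12 (abs_nonneg _)
    _ = |∫ p : ℝ × ℝ,
        (e₁ (p.1 / ε) - e₁ (p.2 / ε)) * (ψ p.1 - ψ p.2) / |p.1 - p.2| ^ (1 + α)| := one_mul _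
    _ ≤ ∫ h, DE ε h := hk
end
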